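/- arXiv:1911.09624 — 16 statements merged into one kernel-verified Lean document; each statement's English description precedes it below -/
import Mathlib

section
/- Let p be a prime, F : ℤ_p → ℤ_p a function, and K ∈ ℕ. Then the following are equivalent: (i) for every ℓ with 1 ≤ ℓ ≤ K and all m, n ∈ ℤ_p with m ≡ n (mod p), one has m ≡ n (mod p^ℓ) if and only if F(m) ≡ F(n) (mod p^{ℓ−1}); (ii) for every ℓ ≤ K and all m, n ∈ ℤ_p, one has (F^i(m) ≡ F^i(n) (mod p) for all i < ℓ) if and only if m ≡ n (mod p^ℓ). In particular, F is a p-adic system if and only if for every k ≥ 1 and all m, n ∈ ℤ_p with m ≡ n (mod p): m ≡ n (mod p^k) ⟺ F(m) ≡ F(n) (mod p^{k−1}). -/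

theorem myaux (p : ℕ) [Fact p.Prime] (F : ℤ_[p] → ℤ_[p]) (K : ℕ) :
    (∀ ℓ : ℕ, 1 ≤ ℓ → ℓ ≤ K → ∀ m n : ℤ_[p], (p : ℤ_[p]) ∣ m - n →
        ((p : ℤ_[p]) ^ ℓ ∣ m - n ↔ (p : ℤ_[p]) ^ (ℓ - 1) ∣ F m - F n)) ↔
      (∀ ℓ : ℕ, ℓ ≤ K → ∀ m n : ℤ_[p],
        (∀ i : ℕ, i < ℓ → (p : ℤ_[p]) ∣ F^[i] m - F^[i] n) ↔ (p : ℤ_[p]) ^ ℓ ∣ m - n) := by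
  constructor
  · intro h ℓ
    induction ℓ with
    | zero => intro _ m n; simp
    | succ ℓ ih =>
      intro hK m n
      have ih' := ih (Nat.le_of_succ_le hK)
      have hmain := h (ℓ+1) (Nat.succ_le_succ (Nat.zero_le _)) hK m n
      constructor
      · intro hi
        have hp : (p : ℤ_[p]) ∣ m - n := by simpa using hi 0 (Nat.succ_pos _)
        have h2 : (p : ℤ_[p]) ^ ℓ ∣ F m - F n := by
          refine (ih' (F m) (F n)).mp (fun i hi' => ?_)
          simpa [Function.iterate_succ_apply] using hi (i+1) (Nat.succ_lt_succ hi')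
        simpa using (hmain hp).mpr (by simpa using h2)
      · intro hd i hi'
        have hp : (p : ℤ_[p]) ∣ m - n :=
          dvd_trans (dvd_pow_self _ (Nat.succ_ne_zero ℓ)) hd
        have h2 : (p : ℤ_[p]) ^ ℓ ∣ F m - F n := by
          simpa using (hmain hp).mp hd
        match i with
        | 0 => simpa using hp
        | j+1 =>
          have := (ih' (F m) (F n)).mpr h2 j (by omega)
          simpa [Function.iterate_succ_apply] using this
  · intro h ℓ h1 hK m n hp
    have hA := h ℓ hK m n
    have hB := h (ℓ-1) (le_trans (Nat.sub_le _ _) hK) (F m) (F n)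
    constructor
    · intro hd
      refine hB.mp (fun i hi => ?_)
      have := hA.mpr hd (i+1) (by omega)
      simpa [Function.iterate_succ_apply] using this
    · intro hd
      refine hA.mp (fun i hi => ?_)
      match i with
      | 0 => simpa using hp
      | j+1 =>
        have := hB.mpr hd j (by omega)
        simpa [Function.iterate_succ_apply] using this

/-- **Characterization of the block property via a single application of `F`**
(Lemma 3.2 / `LOrdFuncBlock` specialized to `A = ℤ_p`).
For a prime `p`, a function `F : ℤ_p → ℤ_p` and `K ∈ ℕ`, the following are equivalent:
(i) for every `1 ≤ ℓ ≤ K` and all `m, n` with `m ≡ n (mod p)`: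
    `m ≡ n (mod p^ℓ) ↔ F m ≡ F n (mod p^(ℓ-1))`;
(ii) for every `ℓ ≤ K` and all `m, n`:
    `(∀ i < ℓ, F^[i] m ≡ F^[i] n (mod p)) ↔ m ≡ n (mod p^ℓ)`.
In particular, `F` is a `p`-adic system iff for every `k ≥ 1` and all `m ≡ n (mod p)`:
`m ≡ n (mod p^k) ↔ F m ≡ F n (mod p^(k-1))`. -/
theorem stmt0 (p : ℕ) [Fact p.Prime] (F : ℤ_[p] → ℤ_[p]) (K : ℕ) :
    ((∀ ℓ : ℕ, 1 ≤ ℓ → ℓ ≤ K → ∀ m n : ℤ_[p], (p : ℤ_[p]) ∣ m - n →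
        ((p : ℤ_[p]) ^ ℓ ∣ m - n ↔ (p : ℤ_[p]) ^ (ℓ - 1) ∣ F m - F n)) ↔
      (∀ ℓ : ℕ, ℓ ≤ K → ∀ m n : ℤ_[p],
        (∀ i : ℕ, i < ℓ → (p : ℤ_[p]) ∣ F^[i] m - F^[i] n) ↔ (p : ℤ_[p]) ^ ℓ ∣ m - n)) ∧
    ((∀ k : ℕ, ∀ m n : ℤ_[p],
        (∀ i : ℕ, i < k → (p : ℤ_[p]) ∣ F^[i] m - F^[i] n) ↔ (p : ℤ_[p]) ^ k ∣ m - n) ↔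
      (∀ k : ℕ, 1 ≤ k → ∀ m n : ℤ_[p], (p : ℤ_[p]) ∣ m - n →
        ((p : ℤ_[p]) ^ k ∣ m - n ↔ (p : ℤ_[p]) ^ (k - 1) ∣ F m - F n))) := by
  refine ⟨myaux p F K, ?_⟩
  constructor
  · intro h k h1 m n hp
    exact ((myaux p F k).mpr (fun ℓ _ => h ℓ)) k h1 le_rfl m n hp
  · intro h k m n
    exact ((myaux p F k).mp (fun ℓ h1 _ => h ℓ h1)) k le_rfl m n
end

section
/- Let p be a prime and F : ℤ_p → ℤ_p a p-adic system. Then the map ψ_F sending n ∈ ℤ_p to its F-digit expansion (the sequence k ↦ residue of F^k(n) modulo p, with values in ℤ/pℤ) is a bijection from ℤ_p onto the set of all sequences ℕ → ℤ/pℤ: for every sequence d : ℕ → ℤ/pℤ there is exactly one n ∈ ℤ_p such that F^k(n) ≡ d(k) (mod p) for all k ∈ ℕ. -/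
/-- For a prime `p` and a `p`-adic system `F : ℤ_p → ℤ_p` (i.e. `F` has the block
property), the map `ψ_F` sending `n ∈ ℤ_p` to its `F`-digit expansion
`k ↦ (F^[k] n) mod p ∈ ℤ/pℤ` is a bijection onto the set of all sequences
`ℕ → ℤ/pℤ`: for every sequence `d` there is exactly one `n ∈ ℤ_p` with
`F^[k] n ≡ d k (mod p)` for all `k`. -/
theorem stmt1 (p : ℕ) [Fact p.Prime] (F : ℤ_[p] → ℤ_[p])
    (hF : ∀ k : ℕ, ∀ m n : ℤ_[p],
      (∀ i : ℕ, i < k → (p : ℤ_[p]) ∣ F^[i] m - F^[i] n) ↔ (p : ℤ_[p]) ^ k ∣ m - n) :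
    ∀ d : ℕ → ZMod p, ∃! n : ℤ_[p], ∀ k : ℕ, PadicInt.toZMod (F^[k] n) = d k := by
  intro d
  have hp : p.Prime := Fact.out
  have hdig : ∀ a b : ℤ_[p], (p : ℤ_[p]) ∣ a - b ↔ PadicInt.toZMod a = PadicInt.toZMod b := by
    intro a b
    rw [← sub_eq_zero (a := PadicInt.toZMod a), ← map_sub, ← RingHom.mem_ker,
      PadicInt.ker_toZMod, PadicInt.maximalIdeal_eq_span_p, Ideal.mem_span_singleton]
  have hpow : ∀ (k : ℕ) (a b : ℤ_[p]),
      (p : ℤ_[p]) ^ k ∣ a - b ↔ PadicInt.toZModPow k a = PadicInt.toZModPow k b := by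
    intro k a b
    rw [← sub_eq_zero (a := PadicInt.toZModPow k a), ← map_sub, ← RingHom.mem_ker,
      PadicInt.ker_toZModPow, Ideal.mem_span_singleton]
  -- finite truncations are realizable
  have hfin : ∀ k : ℕ, ∃ n : ℤ_[p], ∀ i < k, PadicInt.toZMod (F^[i] n) = d i := by
    intro k
    haveI : NeZero (p ^ k) := ⟨pow_ne_zero k hp.ne_zero⟩
    set g : ZMod (p ^ k) → (Fin k → ZMod p) :=
      fun x i => PadicInt.toZMod (F^[(i : ℕ)] ((x.val : ℤ_[p]))) with hg
    have hlift : ∀ x : ZMod (p ^ k), PadicInt.toZModPow k ((x.val : ℤ_[p])) = x := by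
      intro x
      rw [map_natCast, ZMod.natCast_val, ZMod.cast_id]
    have hginj : Function.Injective g := by
      intro x y hxy
      have h1 : ∀ i, i < k → (p : ℤ_[p]) ∣ F^[i] (x.val : ℤ_[p]) - F^[i] (y.val : ℤ_[p]) := by
        intro i hi
        rw [hdig]
        exact congrFun hxy ⟨i, hi⟩
      have h2 := (hF k _ _).mp h1
      rw [hpow, hlift, hlift] at h2
      exact h2
    have hcard : Fintype.card (ZMod (p ^ k)) = Fintype.card (Fin k → ZMod p) := by
      simp [ZMod.card]
    have hgsurj : Function.Surjective g :=
      ((Fintype.bijective_iff_injective_and_card g).mpr ⟨hginj, hcard⟩).2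
    obtain ⟨x, hx⟩ := hgsurj (fun i => d i)
    exact ⟨(x.val : ℤ_[p]), fun i hi => congrFun hx ⟨i, hi⟩⟩
  choose w hw using hfin
  set S : ℕ → Set ℤ_[p] := fun k => {n | ∀ i < k, PadicInt.toZMod (F^[i] n) = d i} with hS
  have hSdvd : ∀ k m, m ∈ S k ↔ (p : ℤ_[p]) ^ k ∣ m - w k := by
    intro k m
    rw [← hF k]
    constructor
    · intro hm i hi
      rw [hdig, hm i hi, hw k i hi]
    · intro h i hi
      rw [(hdig _ _).mp (h i hi), hw k i hi]
  have hSclosed : ∀ k, IsClosed (S k) := by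
    intro k
    have : S k = Metric.closedBall (w k) ((p : ℝ) ^ (-(k : ℤ))) := by
      ext m
      rw [Metric.mem_closedBall, dist_eq_norm, PadicInt.norm_le_pow_iff_mem_span_pow,
        Ideal.mem_span_singleton, ← hSdvd]
    rw [this]
    exact Metric.isClosed_closedBall
  obtain ⟨n, hn⟩ := IsCompact.nonempty_iInter_of_sequence_nonempty_isCompact_isClosed S
    (fun k m hm i hi => hm i (hi.trans (Nat.lt_succ_self k)))
    (fun k => ⟨w k, hw k⟩) ((hSclosed 0).isCompact) hSclosed
  have hn' : ∀ k : ℕ, PadicInt.toZMod (F^[k] n) = d k := fun k =>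
    (Set.mem_iInter.mp hn (k + 1)) k (Nat.lt_succ_self k)
  refine ⟨n, hn', ?_⟩
  intro m hm
  have key : ∀ k : ℕ, ‖m - n‖ ≤ (p : ℝ) ^ (-(k : ℤ)) := by
    intro k
    rw [PadicInt.norm_le_pow_iff_mem_span_pow, Ideal.mem_span_singleton]
    exact (hF k m n).mp fun i _ => (hdig _ _).mpr (by rw [hm i, hn' i])
  have htend : Filter.Tendsto (fun k : ℕ => (p : ℝ) ^ (-(k : ℤ))) Filter.atTop (nhds 0) := by
    have h0 : (0 : ℝ) ≤ (p : ℝ)⁻¹ := by positivity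
    have h1 : (p : ℝ)⁻¹ < 1 := by
      rw [inv_lt_one_iff₀]
      right
      exact_mod_cast hp.one_lt
    have := tendsto_pow_atTop_nhds_zero_of_lt_one h0 h1
    simpa [zpow_neg, zpow_natCast, inv_pow] using this
  have : ‖m - n‖ ≤ 0 := ge_of_tendsto' htend key
  have : m - n = 0 := by
    rw [← norm_eq_zero]
    exact le_antisymm this (norm_nonneg _)
  exact sub_eq_zero.mp this
end

section
/- Let p be a prime and D : ℤ_p → (ℕ → ℤ/pℤ) a map such that: (a) for every n ∈ ℤ_p, D(n)(0) equals the residue of n modulo p; and (b) for every k ∈ ℕ and all m, n ∈ ℤ_p: (D(m)(i) = D(n)(i) for all i < k) if and only if m ≡ n (mod p^k). Then there exists a unique function F : ℤ_p → ℤ_p such that for all n ∈ ℤ_p and k ∈ ℕ, D(n)(k) equals the residue of F^k(n) modulo p; moreover this F is a p-adic system. -/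
variable {p : ℕ} [Fact p.Prime]

lemma stmt3_auxA (a b : ℤ_[p]) : PadicInt.toZMod a = PadicInt.toZMod b ↔ (p : ℤ_[p]) ∣ a - b := by
  rw [← sub_eq_zero, ← map_sub, ← RingHom.mem_ker, PadicInt.ker_toZMod,
    PadicInt.maximalIdeal_eq_span_p, Ideal.mem_span_singleton]

lemma stmt3_auxB (n : ℕ) (x : ℤ_[p]) : (p : ℤ_[p]) ^ n ∣ x ↔ ‖x‖ ≤ (p : ℝ) ^ (-n : ℤ) := by
  rw [PadicInt.norm_le_pow_iff_mem_span_pow, Ideal.mem_span_singleton]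

lemma stmt3_auxC (x : ℤ_[p]) (h : ∀ k : ℕ, (p : ℤ_[p]) ^ k ∣ x) : x = 0 := by
  by_contra hx
  obtain ⟨k, hk⟩ := PadicInt.exists_pow_neg_lt p (norm_pos_iff.mpr hx)
  exact absurd ((stmt3_auxB k x).mp (h k)) (not_le.mpr hk)

-- truncated surjectivity of the digit table
lemma stmt3_auxL1 (D : ℤ_[p] → ℕ → ZMod p)
    (hDblock : ∀ k : ℕ, ∀ m n : ℤ_[p],
      (∀ i : ℕ, i < k → D m i = D n i) ↔ (p : ℤ_[p]) ^ k ∣ m - n)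
    (k : ℕ) (d : ℕ → ZMod p) : ∃ n : ℤ_[p], ∀ i < k, D n i = d i := by
  haveI : NeZero (p ^ k) := ⟨pow_ne_zero _ (Fact.out : p.Prime).ne_zero⟩
  set g : ZMod (p ^ k) → (Fin k → ZMod p) := fun a i => D ((a.val : ℕ) : ℤ_[p]) i with hg
  have hinj : Function.Injective g := by
    intro a b hab
    have h1 : ∀ i : ℕ, i < k → D ((a.val : ℕ) : ℤ_[p]) i = D ((b.val : ℕ) : ℤ_[p]) i := by
      intro i hi
      exact congrFun hab ⟨i, hi⟩
    have h2 := (hDblock k _ _).mp h1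
    have h3 : (PadicInt.toZModPow k) (((a.val : ℕ) : ℤ_[p]) - ((b.val : ℕ) : ℤ_[p])) = 0 := by
      rw [← RingHom.mem_ker, PadicInt.ker_toZModPow, Ideal.mem_span_singleton]
      exact h2
    rw [map_sub, sub_eq_zero, map_natCast, map_natCast, ZMod.natCast_val, ZMod.natCast_val,
      ZMod.cast_id, ZMod.cast_id] at h3
    exact h3
  have hcard : Fintype.card (ZMod (p ^ k)) = Fintype.card (Fin k → ZMod p) := by
    rw [ZMod.card, Fintype.card_fun, ZMod.card, Fintype.card_fin]
  have hsurj : Function.Surjective g :=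
    ((Fintype.bijective_iff_injective_and_card g).mpr ⟨hinj, hcard⟩).2
  obtain ⟨a, ha⟩ := hsurj (fun i : Fin k => d i)
  exact ⟨((a.val : ℕ) : ℤ_[p]), fun i hi => congrFun ha ⟨i, hi⟩⟩

-- full surjectivity
lemma stmt3_auxL2 (D : ℤ_[p] → ℕ → ZMod p)
    (hDblock : ∀ k : ℕ, ∀ m n : ℤ_[p],
      (∀ i : ℕ, i < k → D m i = D n i) ↔ (p : ℤ_[p]) ^ k ∣ m - n)
    (d : ℕ → ZMod p) : ∃ n : ℤ_[p], ∀ i, D n i = d i := by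
  choose a ha using fun k => stmt3_auxL1 D hDblock k d
  have hdiff : ∀ j k : ℕ, (p : ℤ_[p]) ^ (min j k) ∣ a j - a k := by
    intro j k
    refine (hDblock _ _ _).mp fun i hi => ?_
    rw [ha j i (lt_of_lt_of_le hi (min_le_left _ _)),
      ha k i (lt_of_lt_of_le hi (min_le_right _ _))]
  have hcauchy : CauchySeq a := by
    rw [Metric.cauchySeq_iff']
    intro ε hε
    obtain ⟨N, hN⟩ := PadicInt.exists_pow_neg_lt p hε
    refine ⟨N, fun n hn => ?_⟩
    have h1 := (stmt3_auxB _ _).mp (hdiff n N)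
    rw [min_eq_right hn] at h1
    calc dist (a n) (a N) = ‖a n - a N‖ := by rw [dist_eq_norm]
      _ ≤ (p : ℝ) ^ (-N : ℤ) := h1
      _ < ε := hN
  obtain ⟨m, hm⟩ := cauchySeq_tendsto_of_complete hcauchy
  have hlim : ∀ k : ℕ, (p : ℤ_[p]) ^ k ∣ m - a k := by
    intro k
    rw [stmt3_auxB]
    have h1 : Filter.Tendsto (fun j => ‖a j - a k‖) Filter.atTop (nhds ‖m - a k‖) :=
      ((hm.sub_const (a k)).norm)
    refine le_of_tendsto h1 ?_
    filter_upwards [Filter.eventually_ge_atTop k] with j hj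
    have h2 := (stmt3_auxB _ _).mp (hdiff j k)
    rwa [min_eq_right hj] at h2
  refine ⟨m, fun i => ?_⟩
  have h3 := (hDblock (i + 1) m (a (i + 1))).mpr (hlim (i + 1))
  rw [h3 i (Nat.lt_succ_self i), ha (i + 1) i (Nat.lt_succ_self i)]

/-- **Every infinite `p`-digit table with domain `ℤ_p` and block property comes from a
unique `p`-adic system** (`TASeqDTbl`). If `D : ℤ_p → (ℕ → ℤ/pℤ)` satisfies
(a) `D n 0 = n mod p` and (b) the block property
`(∀ i < k, D m i = D n i) ↔ m ≡ n (mod p^k)`, then there is a unique function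
`F : ℤ_p → ℤ_p` with `D n k = (F^[k] n) mod p` for all `n, k`; moreover any such `F`
is a `p`-adic system. -/
theorem stmt3 (p : ℕ) [Fact p.Prime] (D : ℤ_[p] → ℕ → ZMod p)
    (hD0 : ∀ n : ℤ_[p], D n 0 = PadicInt.toZMod n)
    (hDblock : ∀ k : ℕ, ∀ m n : ℤ_[p],
      (∀ i : ℕ, i < k → D m i = D n i) ↔ (p : ℤ_[p]) ^ k ∣ m - n) :
    (∃! F : ℤ_[p] → ℤ_[p], ∀ n : ℤ_[p], ∀ k : ℕ, D n k = PadicInt.toZMod (F^[k] n)) ∧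
    (∀ F : ℤ_[p] → ℤ_[p], (∀ n : ℤ_[p], ∀ k : ℕ, D n k = PadicInt.toZMod (F^[k] n)) →
      ∀ k : ℕ, ∀ m n : ℤ_[p],
        (∀ i : ℕ, i < k → (p : ℤ_[p]) ∣ F^[i] m - F^[i] n) ↔ (p : ℤ_[p]) ^ k ∣ m - n) := by
  -- any shift-compatible F has the digit property
  have key : ∀ F : ℤ_[p] → ℤ_[p], (∀ n i, D (F n) i = D n (i + 1)) →
      ∀ k : ℕ, ∀ n : ℤ_[p], D n k = PadicInt.toZMod (F^[k] n) := by
    intro F hF k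
    induction k with
    | zero => intro n; simpa using hD0 n
    | succ k ih =>
      intro n
      rw [Function.iterate_succ_apply, ← ih (F n), hF]
  constructor
  · -- existence and uniqueness
    choose F hF using fun n : ℤ_[p] => stmt3_auxL2 D hDblock (fun i => D n (i + 1))
    refine ⟨F, fun n k => key F hF k n, ?_⟩
    intro G hG
    funext n
    have hdig : ∀ i, D (G n) i = D (F n) i := by
      intro i
      rw [hF n i, hG (G n) i, ← Function.iterate_succ_apply, ← hG n (i + 1)]
    have : G n = F n := by
      rw [← sub_eq_zero]
      exact stmt3_auxC _ fun k => (hDblock k _ _).mp fun i _ => hdig i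
    exact this
  · -- block property for any such F
    intro F hF k m n
    rw [← hDblock k m n]
    constructor
    · intro h i hi
      rw [hF m i, hF n i, stmt3_auxA]
      exact h i hi
    · intro h i hi
      rw [← stmt3_auxA, ← hF m i, ← hF n i]
      exact h i hi
end

section
/- Let p be a prime, π : ℤ_p → ℤ_p a p-adic permutation, and G : ℤ_p → ℤ_p a p-adic system. Then there exists a unique function F : ℤ_p → ℤ_p such that for all n ∈ ℤ_p and all k ∈ ℕ, F^k(n) ≡ G^k(π(n)) (mod p) (that is, the F-digit expansion of n equals the G-digit expansion of π(n), so π = π_{F,G}); moreover this F is a p-adic system. -/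
/-- **Every `p`-adic permutation is of the form `π_{F,G}`** (`TPermEq`). Given a
`p`-adic permutation `π` (a bijection of `ℤ_p` with `π n ≡ n (mod p)` and
`m ≡ n (mod p^k) ↔ π m ≡ π n (mod p^k)`) and a `p`-adic system `G`, there is a unique
`F : ℤ_p → ℤ_p` whose digit expansions satisfy `F^[k] n ≡ G^[k] (π n) (mod p)` for all
`n, k` (so the `F`-digit expansion of `n` is the `G`-digit expansion of `π n`, i.e.
`π = π_{F,G}`); moreover any such `F` is a `p`-adic system. -/
theorem stmt4 (p : ℕ) [Fact p.Prime] (π : ℤ_[p] → ℤ_[p])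
    (hbij : Function.Bijective π)
    (hres : ∀ n : ℤ_[p], (p : ℤ_[p]) ∣ π n - n)
    (hperm : ∀ k : ℕ, ∀ m n : ℤ_[p],
      (p : ℤ_[p]) ^ k ∣ m - n ↔ (p : ℤ_[p]) ^ k ∣ π m - π n)
    (G : ℤ_[p] → ℤ_[p])
    (hG : ∀ k : ℕ, ∀ m n : ℤ_[p],
      (∀ i : ℕ, i < k → (p : ℤ_[p]) ∣ G^[i] m - G^[i] n) ↔ (p : ℤ_[p]) ^ k ∣ m - n) :
    (∃! F : ℤ_[p] → ℤ_[p], ∀ n : ℤ_[p], ∀ k : ℕ,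
        (p : ℤ_[p]) ∣ F^[k] n - G^[k] (π n)) ∧
    (∀ F : ℤ_[p] → ℤ_[p],
      (∀ n : ℤ_[p], ∀ k : ℕ, (p : ℤ_[p]) ∣ F^[k] n - G^[k] (π n)) →
      ∀ k : ℕ, ∀ m n : ℤ_[p],
        (∀ i : ℕ, i < k → (p : ℤ_[p]) ∣ F^[i] m - F^[i] n) ↔ (p : ℤ_[p]) ^ k ∣ m - n) := by
  obtain ⟨hinj, hsurj⟩ := hbij
  have hp : 2 ≤ p := (Fact.out : p.Prime).two_le
  -- if p^k ∣ x for all k, then x = 0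
  have hzero : ∀ x : ℤ_[p], (∀ k : ℕ, (p : ℤ_[p]) ^ k ∣ x) → x = 0 := by
    intro x hx
    have hnorm : ∀ k : ℕ, ‖x‖ ≤ ((p : ℝ)⁻¹) ^ k := by
      intro k
      have h1 : ‖x‖ ≤ (p : ℝ) ^ (-(k : ℤ)) :=
        (PadicInt.norm_le_pow_iff_mem_span_pow x k).2 (Ideal.mem_span_singleton.2 (hx k))
      calc ‖x‖ ≤ (p : ℝ) ^ (-(k : ℤ)) := h1
        _ = ((p : ℝ)⁻¹) ^ k := by
            rw [zpow_neg, zpow_natCast, inv_pow]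
    have hplt : (p : ℝ)⁻¹ < 1 := by
      rw [inv_lt_one_iff₀]
      right
      exact_mod_cast Nat.lt_of_lt_of_le one_lt_two hp
    have hpnn : (0:ℝ) ≤ (p : ℝ)⁻¹ := by positivity
    have htend : Filter.Tendsto (fun k : ℕ => ((p : ℝ)⁻¹) ^ k) Filter.atTop (nhds 0) :=
      tendsto_pow_atTop_nhds_zero_of_lt_one hpnn hplt
    have : ‖x‖ ≤ 0 := ge_of_tendsto' htend hnorm
    exact norm_le_zero_iff.mp this
  -- key lemma: any F with the digit property intertwines π
  have key : ∀ F : ℤ_[p] → ℤ_[p],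
      (∀ n : ℤ_[p], ∀ k : ℕ, (p : ℤ_[p]) ∣ F^[k] n - G^[k] (π n)) →
      ∀ n, π (F n) = G (π n) := by
    intro F hF n
    have hdvd : ∀ k : ℕ, (p : ℤ_[p]) ^ k ∣ π (F n) - G (π n) := by
      intro k
      rw [← hG]
      intro i hi
      have h1 : (p : ℤ_[p]) ∣ F^[i] (F n) - G^[i] (π (F n)) := hF (F n) i
      have h2 : (p : ℤ_[p]) ∣ F^[i+1] n - G^[i+1] (π n) := hF n (i+1)
      have h3 : F^[i] (F n) = F^[i+1] n := (Function.iterate_succ_apply F i n).symm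
      have h4 : G^[i] (G (π n)) = G^[i+1] (π n) := (Function.iterate_succ_apply G i (π n)).symm
      have heq : G^[i] (π (F n)) - G^[i] (G (π n)) =
          (F^[i+1] n - G^[i+1] (π n)) - (F^[i] (F n) - G^[i] (π (F n))) := by
        rw [h3, h4]; ring
      rw [heq]
      exact dvd_sub h2 h1
    exact sub_eq_zero.mp (hzero _ hdvd)
  -- the candidate F₀ := π⁻¹ ∘ G ∘ π
  set σ := Function.invFun π with hσdef
  have hπσ : ∀ x, π (σ x) = x := fun x => Function.invFun_eq (hsurj x)
  set F₀ : ℤ_[p] → ℤ_[p] := fun n => σ (G (π n)) with hF₀def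
  have hcomm : ∀ n, π (F₀ n) = G (π n) := fun n => hπσ _
  have hiter : ∀ n, ∀ k : ℕ, π (F₀^[k] n) = G^[k] (π n) := by
    intro n k
    induction k generalizing n with
    | zero => simp
    | succ k ih =>
      rw [Function.iterate_succ_apply, Function.iterate_succ_apply, ← hcomm n, ih]
  have hF₀prop : ∀ n : ℤ_[p], ∀ k : ℕ, (p : ℤ_[p]) ∣ F₀^[k] n - G^[k] (π n) := by
    intro n k
    have := hres (F₀^[k] n)
    rw [hiter n k] at this
    have heq : F₀^[k] n - G^[k] (π n) = -(G^[k] (π n) - F₀^[k] n) := by ring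
    rw [heq]
    exact dvd_neg.mpr this
  constructor
  · refine ⟨F₀, hF₀prop, ?_⟩
    intro F hF
    funext n
    apply hinj
    rw [key F hF n, hcomm n]
  · intro F hF k m n
    have hπF := key F hF
    constructor
    · intro h
      rw [hperm, ← hG]
      intro i hi
      have heq : G^[i] (π m) - G^[i] (π n) =
          (F^[i] m - F^[i] n) - (F^[i] m - G^[i] (π m)) + (F^[i] n - G^[i] (π n)) := by ring
      rw [heq]
      exact dvd_add (dvd_sub (h i hi) (hF m i)) (hF n i)
    · intro h i hi
      rw [hperm, ← hG] at h
      have heq : F^[i] m - F^[i] n =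
          (G^[i] (π m) - G^[i] (π n)) + (F^[i] m - G^[i] (π m)) - (F^[i] n - G^[i] (π n)) := by ring
      rw [heq]
      exact dvd_sub (dvd_add (h i hi) (hF m i)) (hF n i)
end

section
/- Let p be a prime, π : ℤ_p → ℤ_p a p-adic permutation, k ∈ ℕ, and x ∈ ℤ_p. Then there exists ℓ ≥ 1 with π^ℓ(x) ≡ x (mod p^k) (i.e., x is a periodic point of the permutation induced by π on ℤ/p^kℤ), and if ℓ is the least such positive integer (the length of the cycle of x), then every prime divisor q of ℓ satisfies q ≤ p. -/
section aux
variable {p : ℕ} [Fact p.Prime] (π : ℤ_[p] → ℤ_[p])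
  (hperm : ∀ k : ℕ, ∀ m n : ℤ_[p],
      (p : ℤ_[p]) ^ k ∣ m - n ↔ (p : ℤ_[p]) ^ k ∣ π m - π n)

include hperm

/-- iterate cancellation -/
lemma aux_iter (j k : ℕ) (m n : ℤ_[p]) :
    (p : ℤ_[p]) ^ k ∣ m - n ↔ (p : ℤ_[p]) ^ k ∣ π^[j] m - π^[j] n := by
  induction j with
  | zero => simp
  | succ j ih =>
      rw [Function.iterate_succ_apply', Function.iterate_succ_apply', ih,
        hperm k (π^[j] m) (π^[j] n)]

lemma aux_add (k a b : ℕ) (x : ℤ_[p])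
    (ha : (p : ℤ_[p]) ^ k ∣ π^[a] x - x) (hb : (p : ℤ_[p]) ^ k ∣ π^[b] x - x) :
    (p : ℤ_[p]) ^ k ∣ π^[a + b] x - x := by
  have h1 : (p : ℤ_[p]) ^ k ∣ π^[b] (π^[a] x) - π^[b] x :=
    (aux_iter π hperm b k _ _).mp ha
  have : π^[a + b] x = π^[b] (π^[a] x) := by
    rw [Nat.add_comm, Function.iterate_add_apply]
  rw [this]
  have := dvd_add h1 hb
  simpa using this

lemma aux_sub (k a b : ℕ) (x : ℤ_[p])
    (hab : (p : ℤ_[p]) ^ k ∣ π^[a + b] x - x) (hb : (p : ℤ_[p]) ^ k ∣ π^[b] x - x) :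
    (p : ℤ_[p]) ^ k ∣ π^[a] x - x := by
  have h1 : π^[a + b] x = π^[b] (π^[a] x) := by
    rw [Nat.add_comm, Function.iterate_add_apply]
  have h2 : (p : ℤ_[p]) ^ k ∣ π^[b] (π^[a] x) - π^[b] x := by
    rw [← h1]
    have := dvd_sub hab hb
    simpa using this
  exact (aux_iter π hperm b k _ _).mpr h2

lemma aux_mul (k ℓ : ℕ) (x : ℤ_[p]) (h : (p : ℤ_[p]) ^ k ∣ π^[ℓ] x - x) :
    ∀ s : ℕ, (p : ℤ_[p]) ^ k ∣ π^[ℓ * s] x - x := by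
  intro s
  induction s with
  | zero => simp
  | succ s ih =>
      have := aux_add π hperm k (ℓ * s) ℓ x ih h
      simpa [Nat.mul_succ] using this

/-- minimal period divides any period -/
lemma aux_min_dvd (k ℓ ℓ' : ℕ) (x : ℤ_[p]) (hl : 1 ≤ ℓ)
    (h : (p : ℤ_[p]) ^ k ∣ π^[ℓ] x - x)
    (hmin : ∀ m : ℕ, 1 ≤ m → (p : ℤ_[p]) ^ k ∣ π^[m] x - x → ℓ ≤ m)
    (h' : (p : ℤ_[p]) ^ k ∣ π^[ℓ'] x - x) : ℓ ∣ ℓ' := by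
  have hdecomp : ℓ' = ℓ' % ℓ + ℓ * (ℓ' / ℓ) := by
    rw [Nat.mod_add_div]
  have hper : (p : ℤ_[p]) ^ k ∣ π^[ℓ' % ℓ] x - x := by
    apply aux_sub π hperm k (ℓ' % ℓ) (ℓ * (ℓ' / ℓ)) x
    · rw [← hdecomp]; exact h'
    · exact aux_mul π hperm k ℓ x h _
  rcases Nat.eq_zero_or_pos (ℓ' % ℓ) with h0 | h0
  · exact Nat.dvd_of_mod_eq_zero h0
  · exact absurd (hmin _ h0 hper) (Nat.not_le.mpr (Nat.mod_lt _ hl))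

/-- existence of a period with all prime factors ≤ p -/
lemma aux_exists (x : ℤ_[p]) : ∀ k : ℕ, ∃ ℓ : ℕ, 1 ≤ ℓ ∧
    (p : ℤ_[p]) ^ k ∣ π^[ℓ] x - x ∧ ∀ q : ℕ, q.Prime → q ∣ ℓ → q ≤ p := by
  intro k
  induction k with
  | zero =>
      exact ⟨1, le_refl 1, by simp, fun q hq hq1 => absurd (Nat.le_of_dvd one_pos hq1)
        (Nat.not_le.mpr hq.one_lt)⟩
  | succ k ih =>
      obtain ⟨ℓ, hl1, hldvd, hlq⟩ := ih
      -- all iterates π^[j*ℓ] x are ≡ x mod p^k; choose quotients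
      have hj : ∀ j : ℕ, ∃ c : ℤ_[p], π^[ℓ * j] x - x = (p : ℤ_[p]) ^ k * c := by
        intro j
        obtain ⟨c, hc⟩ := aux_mul π hperm k ℓ x hldvd j
        exact ⟨c, hc⟩
      choose c hc using hj
      -- pigeonhole into ZMod p
      haveI : NeZero p := ⟨(Fact.out : p.Prime).ne_zero⟩
      have hcard : Fintype.card (ZMod p) < Fintype.card (Fin (p + 1)) := by
        simp [ZMod.card]
      obtain ⟨a, b, hab, heq⟩ := Fintype.exists_ne_map_eq_of_card_lt
        (fun j : Fin (p + 1) => PadicInt.toZMod (c j)) hcard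
      -- wlog a < b
      wlog hlt : (a : ℕ) < (b : ℕ) generalizing a b
      · exact this b a hab.symm heq.symm
          (lt_of_le_of_ne (Nat.le_of_not_lt hlt) (fun h => hab (Fin.ext h.symm)))
      -- p ∣ c b - c a
      have hdvd : (p : ℤ_[p]) ∣ c b - c a := by
        have : PadicInt.toZMod (c b - c a) = 0 := by
          rw [map_sub, heq, sub_self]
        have hmem : (c b - c a) ∈ IsLocalRing.maximalIdeal ℤ_[p] := by
          rw [← PadicInt.ker_toZMod]; exact this
        rwa [PadicInt.maximalIdeal_eq_span_p, Ideal.mem_span_singleton] at hmem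
      -- p^(k+1) ∣ π^[ℓ*b] x - π^[ℓ*a] x
      have hkey : (p : ℤ_[p]) ^ (k + 1) ∣ π^[ℓ * (b : ℕ)] x - π^[ℓ * (a : ℕ)] x := by
        have : π^[ℓ * (b : ℕ)] x - π^[ℓ * (a : ℕ)] x = (p : ℤ_[p]) ^ k * (c b - c a) := by
          rw [mul_sub, ← hc, ← hc]; ring
        rw [this, pow_succ]
        exact mul_dvd_mul_left _ hdvd
      -- derive period ℓ * (b - a)
      set d : ℕ := (b : ℕ) - (a : ℕ) with hd
      have hd1 : 1 ≤ d := Nat.le_sub_of_add_le (by omega)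
      have hdp : d ≤ p := by have := b.isLt; omega
      have hsum : ℓ * (b : ℕ) = ℓ * (a : ℕ) + ℓ * d := by
        rw [← Nat.mul_add, hd]; congr 1; omega
      have hkey2 : (p : ℤ_[p]) ^ (k + 1) ∣ π^[ℓ * (a:ℕ)] (π^[ℓ * d] x) - π^[ℓ * (a:ℕ)] x := by
        rw [← Function.iterate_add_apply, ← hsum]; exact hkey
      have hper : (p : ℤ_[p]) ^ (k + 1) ∣ π^[ℓ * d] x - x :=
        (aux_iter π hperm (ℓ * (a:ℕ)) (k+1) _ _).mpr hkey2
      refine ⟨ℓ * d, Nat.one_le_iff_ne_zero.mpr (by positivity), hper, ?_⟩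
      intro q hq hqdvd
      rcases (Nat.Prime.dvd_mul hq).mp hqdvd with h | h
      · exact hlq q hq h
      · exact le_trans (Nat.le_of_dvd hd1 h) hdp
end aux

/-- **Cycle lengths of induced permutations** (`CCycleLengths`). Let `π` be a `p`-adic
permutation, `k ∈ ℕ` and `x ∈ ℤ_p`. Then some positive iterate of `π` returns `x` to
itself modulo `p^k` (so `x` is a periodic point of the induced permutation of
`ℤ/p^kℤ`), and if `ℓ` is the least such positive integer (the cycle length of `x`),
then every prime divisor `q` of `ℓ` satisfies `q ≤ p`. -/
theorem stmt5 (p : ℕ) [Fact p.Prime] (π : ℤ_[p] → ℤ_[p])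
    (hbij : Function.Bijective π)
    (hres : ∀ n : ℤ_[p], (p : ℤ_[p]) ∣ π n - n)
    (hperm : ∀ k : ℕ, ∀ m n : ℤ_[p],
      (p : ℤ_[p]) ^ k ∣ m - n ↔ (p : ℤ_[p]) ^ k ∣ π m - π n)
    (k : ℕ) (x : ℤ_[p]) :
    (∃ ℓ : ℕ, 1 ≤ ℓ ∧ (p : ℤ_[p]) ^ k ∣ π^[ℓ] x - x) ∧
    (∀ ℓ : ℕ, 1 ≤ ℓ → (p : ℤ_[p]) ^ k ∣ π^[ℓ] x - x →
      (∀ ℓ' : ℕ, 1 ≤ ℓ' → (p : ℤ_[p]) ^ k ∣ π^[ℓ'] x - x → ℓ ≤ ℓ') →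
      ∀ q : ℕ, q.Prime → q ∣ ℓ → q ≤ p) := by
  obtain ⟨L, hL1, hLdvd, hLq⟩ := aux_exists π hperm x k
  refine ⟨⟨L, hL1, hLdvd⟩, ?_⟩
  intro ℓ hℓ1 hℓdvd hmin q hq hqℓ
  have hdvd : ℓ ∣ L := aux_min_dvd π hperm k ℓ L x hℓ1 hℓdvd hmin hLdvd
  exact hLq q hq (hqℓ.trans hdvd)
end

section
/- Let p be a prime, f_0, …, f_{p−1} : ℤ_p → ℤ_p functions, and let F : ℤ_p → ℤ_p satisfy: for every x ∈ ℤ_p and every r ∈ {0,…,p−1} with x ≡ r (mod p), p·F(x) = f_r(x) − (f_r(x) mod p). Let K ∈ ℕ. Then [for every r ∈ {0,…,p−1}, f_r is (p,r)-suitable at every ℓ ≤ K] if and only if [for every ℓ ≤ K and all m, n ∈ ℤ_p: (F^i(m) ≡ F^i(n) (mod p) for all i < ℓ) ⟺ m ≡ n (mod p^ℓ)]. In particular, every f_r is (p,r)-suitable at every ℓ ∈ ℕ if and only if F is a p-adic system. -/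
/-- `z mod p`: the unique element of `{0, …, p−1} ⊆ ℤ_p` congruent to `z` modulo `p`. -/
noncomputable def padicResidue (p : ℕ) [Fact p.Prime] (z : ℤ_[p]) : ℤ_[p] :=
  (PadicInt.zmodRepr z : ℤ_[p])

/-- `f` is `(p,r)`-suitable at `ℓ`: for all `m, n ≡ r (mod p)`,
`m ≡ n (mod p^ℓ)` iff `(f - f % p)(m) ≡ (f - f % p)(n) (mod p^ℓ)`. -/
def Suitable (p : ℕ) [Fact p.Prime] (r : ℕ) (f : ℤ_[p] → ℤ_[p]) (ℓ : ℕ) : Prop :=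
  ∀ m n : ℤ_[p], (p : ℤ_[p]) ∣ m - (r : ℤ_[p]) → (p : ℤ_[p]) ∣ n - (r : ℤ_[p]) →
    ((p : ℤ_[p]) ^ ℓ ∣ m - n ↔
      (p : ℤ_[p]) ^ ℓ ∣ (f m - padicResidue p (f m)) - (f n - padicResidue p (f n)))

lemma res_dvd (p : ℕ) [Fact p.Prime] (z : ℤ_[p]) :
    (p : ℤ_[p]) ∣ z - padicResidue p z := by
  have h := PadicInt.sub_zmodRepr_mem z
  rwa [PadicInt.maximalIdeal_eq_span_p, Ideal.mem_span_singleton] at h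

lemma p_ne_zero (p : ℕ) [hp : Fact p.Prime] : (p : ℤ_[p]) ≠ 0 :=
  Nat.cast_ne_zero.mpr hp.out.ne_zero

lemma cancel (p : ℕ) [Fact p.Prime] (ℓ : ℕ) (a : ℤ_[p]) :
    (p : ℤ_[p]) ^ (ℓ + 1) ∣ (p : ℤ_[p]) * a ↔ (p : ℤ_[p]) ^ ℓ ∣ a := by
  rw [pow_succ']
  exact mul_dvd_mul_iff_left (p_ne_zero p)

lemma main_iff (p : ℕ) [Fact p.Prime] (f : Fin p → ℤ_[p] → ℤ_[p]) (F : ℤ_[p] → ℤ_[p])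
    (hF : ∀ x : ℤ_[p], ∀ r : Fin p, (p : ℤ_[p]) ∣ x - ((r : ℕ) : ℤ_[p]) →
      (p : ℤ_[p]) * F x = f r x - padicResidue p (f r x))
    (K : ℕ) :
    (∀ r : Fin p, ∀ ℓ : ℕ, ℓ ≤ K → Suitable p (r : ℕ) (f r) ℓ) ↔
      (∀ ℓ : ℕ, ℓ ≤ K → ∀ m n : ℤ_[p],
        (∀ i : ℕ, i < ℓ → (p : ℤ_[p]) ∣ F^[i] m - F^[i] n) ↔ (p : ℤ_[p]) ^ ℓ ∣ m - n) := by
  constructor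
  · intro hs ℓ
    induction ℓ with
    | zero => intro _ m n; simp
    | succ ℓ ih =>
      intro hℓK m n
      by_cases hmn : (p : ℤ_[p]) ∣ m - n
      · set r : Fin p := ⟨PadicInt.zmodRepr m, PadicInt.zmodRepr_lt_p m⟩ with hr
        have hm : (p : ℤ_[p]) ∣ m - ((r : ℕ) : ℤ_[p]) := res_dvd p m
        have hn : (p : ℤ_[p]) ∣ n - ((r : ℕ) : ℤ_[p]) := by
          have : n - ((r : ℕ) : ℤ_[p]) = -(m - n) + (m - ((r : ℕ) : ℤ_[p])) := by ring
          rw [this]; exact dvd_add (dvd_neg.mpr hmn) hm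
        have hsuit := hs r (ℓ + 1) hℓK m n hm hn
        have e : (f r m - padicResidue p (f r m)) - (f r n - padicResidue p (f r n))
            = (p : ℤ_[p]) * (F m - F n) := by
          rw [mul_sub, hF m r hm, hF n r hn]
        constructor
        · intro h
          have h' : ∀ i : ℕ, i < ℓ → (p : ℤ_[p]) ∣ F^[i] (F m) - F^[i] (F n) := by
            intro i hi
            have := h (i + 1) (by omega)
            rwa [Function.iterate_succ_apply, Function.iterate_succ_apply] at this
          have hd := (ih (Nat.le_of_succ_le hℓK) (F m) (F n)).mp h'
          rw [hsuit, e, cancel]; exact hd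
        · intro h i hi
          match i with
          | 0 => simpa using hmn
          | (i + 1) =>
            have hFd : (p : ℤ_[p]) ^ ℓ ∣ F m - F n := by
              rw [← cancel, ← e, ← hsuit]; exact h
            have := (ih (Nat.le_of_succ_le hℓK) (F m) (F n)).mpr hFd i (by omega)
            rwa [Function.iterate_succ_apply, Function.iterate_succ_apply]
      · constructor
        · intro h
          exact absurd (by simpa using h 0 (Nat.succ_pos ℓ)) hmn
        · intro h
          exact absurd (dvd_trans (dvd_pow_self _ (Nat.succ_ne_zero ℓ)) h) hmn
  · intro hb r ℓ hℓ m n hm hn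
    have e : (f r m - padicResidue p (f r m)) - (f r n - padicResidue p (f r n))
        = (p : ℤ_[p]) * (F m - F n) := by
      rw [mul_sub, hF m r hm, hF n r hn]
    rw [e]
    match ℓ with
    | 0 => simp
    | (ℓ + 1) =>
      rw [cancel]
      have hmn : (p : ℤ_[p]) ∣ m - n := by
        have : m - n = (m - ((r : ℕ) : ℤ_[p])) - (n - ((r : ℕ) : ℤ_[p])) := by ring
        rw [this]; exact dvd_sub hm hn
      rw [← hb (ℓ + 1) hℓ m n, ← hb ℓ (Nat.le_of_succ_le hℓ) (F m) (F n)]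
      constructor
      · intro h i hi
        have := h (i + 1) (by omega)
        rwa [Function.iterate_succ_apply, Function.iterate_succ_apply] at this
      · intro h i hi
        match i with
        | 0 => simpa using hmn
        | (i + 1) =>
          have := h i (by omega)
          rwa [Function.iterate_succ_apply, Function.iterate_succ_apply]

/-- **The block property of a `p`-fibred function is equivalent to suitability of its
branches** (`TFuncSuit (2)`). Let `f 0, …, f (p-1) : ℤ_p → ℤ_p` be the branches and
`F` the associated function, `p * F x = f r x − (f r x mod p)` whenever
`x ≡ r (mod p)`. Then all branches are `(p,r)`-suitable at every `ℓ ≤ K` iff `F` has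
the block property at every `ℓ ≤ K`; in particular all branches are `(p,r)`-suitable
at every `ℓ` iff `F` is a `p`-adic system. -/
theorem stmt6 (p : ℕ) [Fact p.Prime] (f : Fin p → ℤ_[p] → ℤ_[p]) (F : ℤ_[p] → ℤ_[p])
    (hF : ∀ x : ℤ_[p], ∀ r : Fin p, (p : ℤ_[p]) ∣ x - ((r : ℕ) : ℤ_[p]) →
      (p : ℤ_[p]) * F x = f r x - padicResidue p (f r x))
    (K : ℕ) :
    ((∀ r : Fin p, ∀ ℓ : ℕ, ℓ ≤ K → Suitable p (r : ℕ) (f r) ℓ) ↔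
      (∀ ℓ : ℕ, ℓ ≤ K → ∀ m n : ℤ_[p],
        (∀ i : ℕ, i < ℓ → (p : ℤ_[p]) ∣ F^[i] m - F^[i] n) ↔ (p : ℤ_[p]) ^ ℓ ∣ m - n)) ∧
    ((∀ r : Fin p, ∀ ℓ : ℕ, Suitable p (r : ℕ) (f r) ℓ) ↔
      (∀ k : ℕ, ∀ m n : ℤ_[p],
        (∀ i : ℕ, i < k → (p : ℤ_[p]) ∣ F^[i] m - F^[i] n) ↔ (p : ℤ_[p]) ^ k ∣ m - n)) := by
  refine ⟨main_iff p f F hF K, ?_, ?_⟩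
  · intro hs k
    exact (main_iff p f F hF k).mp (fun r ℓ _ => hs r ℓ) k le_rfl
  · intro hb r ℓ
    exact (main_iff p f F hF ℓ).mpr (fun ℓ' _ => hb ℓ') r ℓ le_rfl
end

section
/- Let p be a prime, r ∈ {0,…,p−1}, f a polynomial with coefficients in ℤ_p, and k ≥ 2 a natural number. Then the following are equivalent: (i) for all m, n ∈ ℤ_p with m ≡ r (mod p) and n ≡ r (mod p): m ≡ n (mod p^k) if and only if f(m) ≡ f(n) (mod p^k); (ii) f′(r) is a unit of ℤ_p, i.e., p does not divide the value of the derivative of f at r. -/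
lemma not_isUnit_iff_dvd {p : ℕ} [Fact p.Prime] (x : ℤ_[p]) :
    ¬ IsUnit x ↔ (p : ℤ_[p]) ∣ x := by
  rw [PadicInt.isUnit_iff, ← PadicInt.norm_lt_one_iff_dvd]
  have h := PadicInt.norm_le_one x
  exact ⟨fun h1 => lt_of_le_of_ne h h1, fun h1 => ne_of_lt h1⟩

/-- **`(p,r)`-suitability of polynomials over `ℤ_p`** (`TPropPolyF (3)`).
For a prime `p`, `r ∈ {0,…,p−1}`, a polynomial `f ∈ ℤ_p[x]` and `k ≥ 2`:
`f` is `(p,r)`-suitable at `k`, i.e. for all `m, n ≡ r (mod p)` one has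
`m ≡ n (mod p^k) ↔ f(m) ≡ f(n) (mod p^k)`, if and only if `f′(r)` is a unit of
`ℤ_p` (i.e. `p ∤ f′(r)`). -/
theorem stmt8 (p : ℕ) [Fact p.Prime] (r : ℕ) (hr : r < p) (f : Polynomial ℤ_[p])
    (k : ℕ) (hk : 2 ≤ k) :
    (∀ m n : ℤ_[p], (p : ℤ_[p]) ∣ m - (r : ℤ_[p]) → (p : ℤ_[p]) ∣ n - (r : ℤ_[p]) →
        ((p : ℤ_[p]) ^ k ∣ m - n ↔ (p : ℤ_[p]) ^ k ∣ f.eval m - f.eval n)) ↔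
    IsUnit ((Polynomial.derivative f).eval (r : ℤ_[p])) := by
  have hp0 : (p : ℤ_[p]) ≠ 0 := by
    exact_mod_cast Nat.cast_ne_zero.mpr (Fact.out (p := p.Prime)).pos.ne'
  constructor
  · intro H
    by_contra hu
    rw [not_isUnit_iff_dvd] at hu
    set t : ℤ_[p] := (p : ℤ_[p]) ^ (k - 1) with ht
    have hm : (p : ℤ_[p]) ∣ ((r : ℤ_[p]) + t) - (r : ℤ_[p]) := by
      simp only [add_sub_cancel_left, ht]
      exact dvd_pow_self _ (by omega)
    have hn : (p : ℤ_[p]) ∣ (r : ℤ_[p]) - (r : ℤ_[p]) := by simp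
    obtain ⟨c, hc⟩ := f.binomExpansion (r : ℤ_[p]) t
    have hpk : (p : ℤ_[p]) * (p : ℤ_[p]) ^ (k - 1) = (p : ℤ_[p]) ^ k := by
      rw [← pow_succ']; congr 1; omega
    have hdvd : (p : ℤ_[p]) ^ k ∣ f.eval ((r : ℤ_[p]) + t) - f.eval (r : ℤ_[p]) := by
      rw [hc]
      have h1 : (p : ℤ_[p]) ^ k ∣ (Polynomial.derivative f).eval (r : ℤ_[p]) * t := by
        obtain ⟨d, hd⟩ := hu
        rw [hd, ht, ← hpk]
        exact mul_dvd_mul (Dvd.intro d rfl) dvd_rfl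
      have h2 : (p : ℤ_[p]) ^ k ∣ c * t ^ 2 := by
        rw [ht, ← pow_mul]
        exact Dvd.dvd.mul_left (pow_dvd_pow _ (by omega)) c
      have h3 := dvd_add h1 h2
      convert h3 using 1
      ring
    have h4 := (H _ _ hm hn).mpr hdvd
    rw [add_sub_cancel_left, ht, ← hpk] at h4
    have h5 : (p : ℤ_[p]) ^ (k - 1) * (p : ℤ_[p]) ∣ (p : ℤ_[p]) ^ (k - 1) * 1 := by
      simpa [mul_comm] using h4
    have h6 : (p : ℤ_[p]) ∣ 1 :=
      (mul_dvd_mul_iff_left (pow_ne_zero _ hp0)).mp h5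
    exact (not_isUnit_iff_dvd _).mpr h6 (isUnit_one)
  · intro hu m n hm hn
    set t : ℤ_[p] := m - n with ht
    have hpt : (p : ℤ_[p]) ∣ t := by
      have := dvd_sub hm hn
      simpa [ht] using this
    obtain ⟨c, hc⟩ := f.binomExpansion n t
    have hmn : n + t = m := by rw [ht]; ring
    have key : f.eval m - f.eval n =
        t * ((Polynomial.derivative f).eval n + c * t) := by
      rw [← hmn, hc]; ring
    have hun : IsUnit ((Polynomial.derivative f).eval n + c * t) := by
      by_contra hcon
      rw [not_isUnit_iff_dvd] at hcon
      have h1 : (p : ℤ_[p]) ∣ (Polynomial.derivative f).eval n := by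
        have := dvd_sub hcon (hpt.mul_left c)
        simpa using this
      have h2 : (p : ℤ_[p]) ∣ (Polynomial.derivative f).eval n
          - (Polynomial.derivative f).eval (r : ℤ_[p]) :=
        dvd_trans hn (Polynomial.sub_dvd_eval_sub n (r : ℤ_[p]) _)
      have h3 : (p : ℤ_[p]) ∣ (Polynomial.derivative f).eval (r : ℤ_[p]) := by
        have := dvd_sub h1 h2
        simpa using this
      exact (not_isUnit_iff_dvd _).mpr h3 hu
    rw [key]
    exact (IsUnit.dvd_mul_right hun).symm
end

section
/- Let p be a prime, r ∈ {0,…,p−1}, g and h polynomials with coefficients in ℤ_p such that h(r) is a unit of ℤ_p, let c ∈ {0,…,p−1} satisfy g(r) ≡ c·h(r) (mod p), and let k ≥ 2. Then the following are equivalent: (i) for all m, n ∈ ℤ_p with m ≡ r (mod p) and n ≡ r (mod p): m ≡ n (mod p^k) if and only if p^k divides g(m)·h(n) − g(n)·h(m); (ii) for all m, n ∈ ℤ_p with m ≡ r (mod p) and n ≡ r (mod p): m ≡ n (mod p^k) if and only if (g − c·h)(m) ≡ (g − c·h)(n) (mod p^k). -/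
section helpers

variable {p : ℕ} [Fact p.Prime]

lemma padic_not_unit_iff_dvd (x : ℤ_[p]) : ¬ IsUnit x ↔ (p : ℤ_[p]) ∣ x := by
  rw [PadicInt.isUnit_iff, ← PadicInt.norm_lt_one_iff_dvd]
  constructor
  · intro hx
    exact lt_of_le_of_ne (PadicInt.norm_le_one x) hx
  · intro hx h1
    exact absurd h1 (ne_of_lt hx)

lemma padic_unit_of_dvd_sub {a b : ℤ_[p]} (ha : IsUnit a) (hd : (p : ℤ_[p]) ∣ a - b) :
    IsUnit b := by
  by_contra hb
  rw [padic_not_unit_iff_dvd] at hb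
  have : (p : ℤ_[p]) ∣ a := by
    have := dvd_add hd hb
    simpa using this
  rw [← padic_not_unit_iff_dvd] at this
  exact this ha

lemma padic_pow_dvd_mul_unit {u x : ℤ_[p]} (hu : IsUnit u) (k : ℕ) :
    (p : ℤ_[p]) ^ k ∣ x * u ↔ (p : ℤ_[p]) ^ k ∣ x := by
  constructor
  · intro hd
    obtain ⟨v, hv⟩ := hu
    have := hd.mul_right (↑v⁻¹)
    rwa [mul_assoc, ← hv, Units.mul_inv, mul_one] at this
  · intro hd
    exact hd.mul_right u

end helpers


/-- **`(p,r)`-suitability of rational functions with unit denominator**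
(`TPropRatF (3)`). Let `g, h ∈ ℤ_p[x]` with `h(r)` a unit, `c ∈ {0,…,p−1}` with
`g(r) ≡ c·h(r) (mod p)`, and `k ≥ 2`. Then the rational function `g/h` is
`(p,r)`-suitable at `k` — expressed by the cross-product condition
`m ≡ n (mod p^k) ↔ p^k ∣ g(m)h(n) − g(n)h(m)` for `m, n ≡ r (mod p)` — iff the
polynomial `g − c·h` is `(p,r)`-suitable at `k`. -/
theorem stmt9 (p : ℕ) [Fact p.Prime] (r : ℕ) (hr : r < p) (g h : Polynomial ℤ_[p])
    (hu : IsUnit (h.eval (r : ℤ_[p]))) (c : ℕ) (hc : c < p)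
    (hgc : (p : ℤ_[p]) ∣ g.eval (r : ℤ_[p]) - (c : ℤ_[p]) * h.eval (r : ℤ_[p]))
    (k : ℕ) (hk : 2 ≤ k) :
    (∀ m n : ℤ_[p], (p : ℤ_[p]) ∣ m - (r : ℤ_[p]) → (p : ℤ_[p]) ∣ n - (r : ℤ_[p]) →
        ((p : ℤ_[p]) ^ k ∣ m - n ↔
          (p : ℤ_[p]) ^ k ∣ g.eval m * h.eval n - g.eval n * h.eval m)) ↔
    (∀ m n : ℤ_[p], (p : ℤ_[p]) ∣ m - (r : ℤ_[p]) → (p : ℤ_[p]) ∣ n - (r : ℤ_[p]) →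
        ((p : ℤ_[p]) ^ k ∣ m - n ↔
          (p : ℤ_[p]) ^ k ∣ (g.eval m - (c : ℤ_[p]) * h.eval m) -
            (g.eval n - (c : ℤ_[p]) * h.eval n))) := by
  set f : Polynomial ℤ_[p] := g - Polynomial.C (c : ℤ_[p]) * h with hf
  have hfev : ∀ x : ℤ_[p], f.eval x = g.eval x - (c : ℤ_[p]) * h.eval x := by
    intro x; simp [hf]
  set D : ℤ_[p] := f.derivative.eval (r : ℤ_[p]) with hD
  -- key structural lemma
  have key : ∀ m n : ℤ_[p], (p : ℤ_[p]) ∣ m - (r : ℤ_[p]) → (p : ℤ_[p]) ∣ n - (r : ℤ_[p]) →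
      ∃ A U : ℤ_[p],
        f.eval m - f.eval n = (m - n) * A ∧
        g.eval m * h.eval n - g.eval n * h.eval m = (m - n) * U ∧
        (p : ℤ_[p]) ∣ A - D ∧ (p : ℤ_[p]) ∣ U - h.eval n * A := by
    intro m n hm hn
    obtain ⟨K, hK⟩ := f.binomExpansion n (m - n)
    obtain ⟨L, hL⟩ := h.binomExpansion n (m - n)
    rw [add_sub_cancel] at hK hL
    have hmn : (p : ℤ_[p]) ∣ m - n := by
      have := dvd_sub hm hn; simpa using this
    refine ⟨f.derivative.eval n + K * (m - n), h.eval n * (f.derivative.eval n + K * (m - n))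
      - f.eval n * (h.derivative.eval n + L * (m - n)), ?_, ?_, ?_, ?_⟩
    · rw [hK]; ring
    · have hcr : g.eval m * h.eval n - g.eval n * h.eval m
          = h.eval n * (f.eval m - f.eval n) - f.eval n * (h.eval m - h.eval n) := by
        rw [hfev, hfev]; ring
      rw [hcr, hK, hL]; ring
    · have h1 : (p : ℤ_[p]) ∣ f.derivative.eval n - D := by
        exact dvd_trans hn (Polynomial.sub_dvd_eval_sub n (r : ℤ_[p]) f.derivative)
      have h2 : (p : ℤ_[p]) ∣ K * (m - n) := Dvd.dvd.mul_left hmn K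
      have := dvd_add h1 h2
      rw [show f.derivative.eval n - D + K * (m - n)
          = f.derivative.eval n + K * (m - n) - D by ring] at this
      exact this
    · have hfn : (p : ℤ_[p]) ∣ f.eval n := by
        have h1 : (p : ℤ_[p]) ∣ f.eval n - f.eval (r : ℤ_[p]) :=
          dvd_trans hn (Polynomial.sub_dvd_eval_sub n (r : ℤ_[p]) f)
        have h2 : (p : ℤ_[p]) ∣ f.eval (r : ℤ_[p]) := by rw [hfev]; exact hgc
        have := dvd_add h1 h2; simpa using this
      have := hfn.mul_right (h.derivative.eval n + L * (m - n))
      rw [show h.eval n * (f.derivative.eval n + K * (m - n))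
          - f.eval n * (h.derivative.eval n + L * (m - n))
          - h.eval n * (f.derivative.eval n + K * (m - n))
          = -(f.eval n * (h.derivative.eval n + L * (m - n))) by ring]
      exact this.neg_right
  by_cases hDu : IsUnit D
  · -- both sides hold
    have main : ∀ m n : ℤ_[p], (p : ℤ_[p]) ∣ m - (r : ℤ_[p]) → (p : ℤ_[p]) ∣ n - (r : ℤ_[p]) →
        (((p : ℤ_[p]) ^ k ∣ m - n ↔
          (p : ℤ_[p]) ^ k ∣ g.eval m * h.eval n - g.eval n * h.eval m) ∧
         ((p : ℤ_[p]) ^ k ∣ m - n ↔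
          (p : ℤ_[p]) ^ k ∣ f.eval m - f.eval n)) := by
      intro m n hm hn
      obtain ⟨A, U, hA, hU, hAD, hUA⟩ := key m n hm hn
      have hAu : IsUnit A := padic_unit_of_dvd_sub hDu (by
        have := hAD.neg_right; rw [neg_sub] at this; exact this)
      have hhn : IsUnit (h.eval n) := by
        refine padic_unit_of_dvd_sub hu ?_
        have hd := (dvd_trans hn (Polynomial.sub_dvd_eval_sub n (r : ℤ_[p]) h)).neg_right
        rwa [neg_sub] at hd
      have hUu : IsUnit U := padic_unit_of_dvd_sub (hhn.mul hAu) (by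
        have := hUA.neg_right; rw [neg_sub] at this; exact this)
      constructor
      · rw [hU, padic_pow_dvd_mul_unit hUu]
      · rw [hA, padic_pow_dvd_mul_unit hAu]
    constructor <;> intro _ m n hm hn
    · have := (main m n hm hn).2
      rw [hfev, hfev] at this; exact this
    · exact (main m n hm hn).1
  · -- both sides fail: conclude iff of two falsehoods
    rw [padic_not_unit_iff_dvd] at hDu
    set m : ℤ_[p] := (r : ℤ_[p])
    set n : ℤ_[p] := (r : ℤ_[p]) + (p : ℤ_[p]) ^ (k - 1)
    have hm : (p : ℤ_[p]) ∣ m - (r : ℤ_[p]) := by simp [m]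
    have hn : (p : ℤ_[p]) ∣ n - (r : ℤ_[p]) := by
      simp only [n, add_sub_cancel_left]
      exact dvd_pow_self (p : ℤ_[p]) (by omega)
    have hsub : m - n = -((p : ℤ_[p]) ^ (k - 1)) := by simp [m, n]
    have hkk : (p : ℤ_[p]) ^ k = (p : ℤ_[p]) ^ (k - 1) * (p : ℤ_[p]) := by
      rw [← pow_succ]; congr 1; omega
    have hndvd : ¬ (p : ℤ_[p]) ^ k ∣ m - n := by
      rw [hsub, dvd_neg, hkk]
      intro hd
      have hp0 : (p : ℤ_[p]) ^ (k - 1) ≠ 0 :=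
        pow_ne_zero _ (PadicInt.prime_p.ne_zero)
      have h1 : (p : ℤ_[p]) ^ (k - 1) * (p : ℤ_[p]) ∣ (p : ℤ_[p]) ^ (k - 1) * 1 := by
        simpa using hd
      exact PadicInt.prime_p.not_unit
        (isUnit_of_dvd_one ((mul_dvd_mul_iff_left hp0).mp h1))
    obtain ⟨A, U, hA, hU, hAD, hUA⟩ := key m n hm hn
    have hpA : (p : ℤ_[p]) ∣ A := by
      have := dvd_add hAD hDu; simpa using this
    have hpU : (p : ℤ_[p]) ∣ U := by
      have := dvd_add hUA ((hpA.mul_left (h.eval n)))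
      simpa using this
    have hkdvd : ∀ x : ℤ_[p], (p : ℤ_[p]) ∣ x → (p : ℤ_[p]) ^ k ∣ (m - n) * x := by
      intro x hx
      obtain ⟨y, hy⟩ := hx
      rw [hsub, hy, hkk]
      exact ⟨-y, by ring⟩
    constructor <;> intro H
    · exfalso
      have := (H m n hm hn).mpr (hU ▸ hkdvd U hpU)
      exact hndvd this
    · exfalso
      have := (H m n hm hn).mpr (by
        rw [← hfev, ← hfev]
        exact hA ▸ hkdvd A hpA)
      exact hndvd this
end

section
/- Generalized Hensel's Lemma: Let p be a prime, r ∈ {0,…,p−1}, and f : ℤ_p → ℤ_p an arbitrary function such that: (a) p divides f(n) for every n ∈ ℤ_p with n ≡ r (mod p); and (b) for every k ∈ ℕ and all m, n ∈ ℤ_p with m ≡ r (mod p) and n ≡ r (mod p): m ≡ n (mod p^k) if and only if f(m) ≡ f(n) (mod p^k). Then f has a unique root in the residue class of r: there exists exactly one a ∈ ℤ_p with a ≡ r (mod p) and f(a) = 0. -/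
open Filter Topology

private lemma pdvd_iff_norm {p : ℕ} [Fact p.Prime] (n : ℕ) (x : ℤ_[p]) :
    (p : ℤ_[p]) ^ n ∣ x ↔ ‖x‖ ≤ (p : ℝ) ^ (-(n : ℤ)) := by
  rw [PadicInt.norm_le_pow_iff_mem_span_pow, Ideal.mem_span_singleton]

private lemma tendsto_pinv {p : ℕ} [Fact p.Prime] :
    Tendsto (fun n : ℕ => ((p : ℝ)⁻¹) ^ n) atTop (𝓝 0) := by
  have hp : 1 < (p : ℝ) := by exact_mod_cast (Fact.out : p.Prime).one_lt
  exact tendsto_pow_atTop_nhds_zero_of_lt_one (by positivity)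
    (by rw [inv_lt_one_iff₀]; right; exact hp)

private lemma neg_zpow_eq {p : ℕ} [Fact p.Prime] (n : ℕ) :
    (p : ℝ) ^ (-(n : ℤ)) = ((p : ℝ)⁻¹) ^ n := by
  rw [zpow_neg, zpow_natCast, inv_pow]

private lemma eq_zero_of_forall_pow_dvd {p : ℕ} [Fact p.Prime] (x : ℤ_[p])
    (h : ∀ n : ℕ, (p : ℤ_[p]) ^ n ∣ x) : x = 0 := by
  have h0 : ∀ n : ℕ, ‖x‖ ≤ ((p : ℝ)⁻¹) ^ n := fun n => by
    rw [← neg_zpow_eq]; exact (pdvd_iff_norm n x).mp (h n)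
  have : ‖x‖ ≤ 0 := ge_of_tendsto' tendsto_pinv h0
  exact norm_le_zero_iff.mp this

private lemma exists_approx {p : ℕ} [Fact p.Prime] (r : ℕ) (f : ℤ_[p] → ℤ_[p])
    (hmod : ∀ n : ℤ_[p], (p : ℤ_[p]) ∣ n - (r : ℤ_[p]) → (p : ℤ_[p]) ∣ f n)
    (hsuit : ∀ k : ℕ, ∀ m n : ℤ_[p],
      (p : ℤ_[p]) ∣ m - (r : ℤ_[p]) → (p : ℤ_[p]) ∣ n - (r : ℤ_[p]) →
      ((p : ℤ_[p]) ^ k ∣ m - n ↔ (p : ℤ_[p]) ^ k ∣ f m - f n)) (k : ℕ) :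
    ∃ n : ℤ_[p], (p : ℤ_[p]) ∣ n - (r : ℤ_[p]) ∧ (p : ℤ_[p]) ^ k ∣ f n := by
  have hp : p.Prime := Fact.out
  haveI : NeZero (p ^ k) := ⟨pow_ne_zero k hp.ne_zero⟩
  have hp0 : (p : ℤ_[p]) ≠ 0 := by
    have hn : ‖(p : ℤ_[p])‖ ≠ 0 := by
      rw [PadicInt.norm_p]
      have : (0:ℝ) < (p:ℝ)⁻¹ := by
        have : (0:ℝ) < (p:ℝ) := by exact_mod_cast hp.pos
        positivity
      exact ne_of_gt this
    exact fun h => hn (by rw [h, norm_zero])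
  set lift : ZMod (p ^ k) → ℤ_[p] := fun z => ((z.val : ℤ_[p])) with hlift
  set n : ZMod (p ^ k) → ℤ_[p] := fun z => (r : ℤ_[p]) + p * lift z with hn
  have hdiv : ∀ z : ZMod (p ^ k), (p : ℤ_[p]) ∣ n z - (r : ℤ_[p]) :=
    fun z => ⟨lift z, by rw [hn]; ring⟩
  choose c hc using fun z => exists_eq_mul_right_of_dvd (hmod (n z) (hdiv z))
  set φ : ZMod (p ^ k) → ZMod (p ^ k) := fun z => PadicInt.toZModPow k (c z) with hφ
  have kerlem : ∀ x : ℤ_[p], PadicInt.toZModPow k x = 0 ↔ (p : ℤ_[p]) ^ k ∣ x := by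
    intro x
    rw [← RingHom.mem_ker, PadicInt.ker_toZModPow, Ideal.mem_span_singleton]
  have liftkey : ∀ z : ZMod (p ^ k), PadicInt.toZModPow k (lift z) = z := fun z => by
    rw [hlift]; simp [map_natCast, ZMod.natCast_zmod_val]
  have hinj : Function.Injective φ := by
    intro z w h
    have h1 : (p : ℤ_[p]) ^ k ∣ c z - c w :=
      (kerlem _).mp (by rw [map_sub, sub_eq_zero]; exact h)
    obtain ⟨d, hd⟩ := h1
    have h2 : (p : ℤ_[p]) ^ (k + 1) ∣ f (n z) - f (n w) :=
      ⟨d, by rw [hc z, hc w]; linear_combination (p : ℤ_[p]) * hd⟩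
    have h3 := (hsuit (k + 1) (n z) (n w) (hdiv z) (hdiv w)).mpr h2
    obtain ⟨e, he⟩ := h3
    have h4 : lift z - lift w = (p : ℤ_[p]) ^ k * e := by
      apply mul_left_cancel₀ hp0
      have : n z - n w = (p : ℤ_[p]) * (lift z - lift w) := by rw [hn]; ring
      rw [← this, he]; ring
    have h5 : PadicInt.toZModPow k (lift z - lift w) = 0 := (kerlem _).mpr ⟨e, h4⟩
    rw [map_sub, sub_eq_zero, liftkey, liftkey] at h5
    exact h5
  have hsurj : Function.Surjective φ := Finite.injective_iff_surjective.mp hinj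
  obtain ⟨z, hz⟩ := hsurj 0
  have h6 : (p : ℤ_[p]) ^ k ∣ c z := (kerlem _).mp hz
  refine ⟨n z, hdiv z, ?_⟩
  obtain ⟨d, hd⟩ := h6
  exact ⟨p * d, by rw [hc z, hd]; ring⟩

/-- **Generalized Hensel's Lemma** (`TSuitFUnRoot`). Let `p` be a prime,
`r ∈ {0,…,p−1}`, and `f : ℤ_p → ℤ_p` an arbitrary function such that
(a) `p ∣ f n` for every `n ≡ r (mod p)`, and (b) `f` is `(p,r)`-suitable: for every
`k` and all `m, n ≡ r (mod p)`, `m ≡ n (mod p^k) ↔ f(m) ≡ f(n) (mod p^k)`.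
Then `f` has a unique root in the residue class of `r`. -/
theorem stmt10 (p : ℕ) [Fact p.Prime] (r : ℕ) (hr : r < p) (f : ℤ_[p] → ℤ_[p])
    (hmod : ∀ n : ℤ_[p], (p : ℤ_[p]) ∣ n - (r : ℤ_[p]) → (p : ℤ_[p]) ∣ f n)
    (hsuit : ∀ k : ℕ, ∀ m n : ℤ_[p],
      (p : ℤ_[p]) ∣ m - (r : ℤ_[p]) → (p : ℤ_[p]) ∣ n - (r : ℤ_[p]) →
      ((p : ℤ_[p]) ^ k ∣ m - n ↔ (p : ℤ_[p]) ^ k ∣ f m - f n)) :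
    ∃! a : ℤ_[p], (p : ℤ_[p]) ∣ a - (r : ℤ_[p]) ∧ f a = 0 := by
  choose a ha1 ha2 using exists_approx r f hmod hsuit
  -- key divisibility between terms
  have hkey : ∀ N m n : ℕ, N ≤ m → N ≤ n → (p : ℤ_[p]) ^ N ∣ a m - a n := by
    intro N m n hm hn
    refine (hsuit N (a m) (a n) (ha1 m) (ha1 n)).mpr ?_
    exact dvd_sub ((pow_dvd_pow (p : ℤ_[p]) hm).trans (ha2 m))
      ((pow_dvd_pow (p : ℤ_[p]) hn).trans (ha2 n))
  have hcauchy : CauchySeq a := by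
    apply cauchySeq_of_le_tendsto_0 (fun N => ((p : ℝ)⁻¹) ^ N) ?_ tendsto_pinv
    intro m n N hm hn
    show dist (a m) (a n) ≤ ((p : ℝ)⁻¹) ^ N
    rw [dist_eq_norm, ← neg_zpow_eq]
    exact (pdvd_iff_norm N _).mp (hkey N m n hm hn)
  obtain ⟨L, hL⟩ := cauchySeq_tendsto_of_complete hcauchy
  -- L is in the residue class of r
  have hLr : (p : ℤ_[p]) ∣ L - (r : ℤ_[p]) := by
    have hclosed : IsClosed {x : ℤ_[p] | ‖x - (r : ℤ_[p])‖ ≤ (p : ℝ) ^ (-(1 : ℕ) : ℤ)} :=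
      isClosed_le ((continuous_id.sub continuous_const).norm) continuous_const
    have hmem : L ∈ {x : ℤ_[p] | ‖x - (r : ℤ_[p])‖ ≤ (p : ℝ) ^ (-(1 : ℕ) : ℤ)} := by
      refine hclosed.mem_of_tendsto hL (Filter.Eventually.of_forall fun n => ?_)
      have := (pdvd_iff_norm 1 (a n - (r : ℤ_[p]))).mp (by simpa using ha1 n)
      simpa using this
    have := (pdvd_iff_norm 1 (L - (r : ℤ_[p]))).mpr (by simpa using hmem)
    simpa using this
  -- p^k divides L - a k
  have hLk : ∀ k : ℕ, (p : ℤ_[p]) ^ k ∣ L - a k := by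
    intro k
    have hclosed : IsClosed {x : ℤ_[p] | ‖x - a k‖ ≤ (p : ℝ) ^ (-(k : ℕ) : ℤ)} :=
      isClosed_le ((continuous_id.sub continuous_const).norm) continuous_const
    have hmem : L ∈ {x : ℤ_[p] | ‖x - a k‖ ≤ (p : ℝ) ^ (-(k : ℕ) : ℤ)} := by
      refine hclosed.mem_of_tendsto hL ?_
      filter_upwards [eventually_ge_atTop k] with n hn
      exact (pdvd_iff_norm k _).mp (hkey k n k hn le_rfl)
    exact (pdvd_iff_norm k _).mpr hmem
  have hfL : f L = 0 := by
    apply eq_zero_of_forall_pow_dvd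
    intro k
    have h1 : (p : ℤ_[p]) ^ k ∣ f L - f (a k) :=
      (hsuit k L (a k) hLr (ha1 k)).mp (hLk k)
    have := dvd_add h1 (ha2 k)
    simpa using this
  refine ⟨L, ⟨hLr, hfL⟩, ?_⟩
  rintro b ⟨hbr, hb0⟩
  have : ∀ k : ℕ, (p : ℤ_[p]) ^ k ∣ b - L := fun k =>
    (hsuit k b L hbr hLr).mpr (by rw [hb0, hfL, sub_zero]; exact dvd_zero _)
  have := eq_zero_of_forall_pow_dvd (b - L) this
  exact sub_eq_zero.mp this
end

section
/- Let p be a prime, r ∈ {0,…,p−1}, and f a polynomial with coefficients in ℤ_p such that p divides f(r). Then the following are equivalent: (i) for every k ∈ ℕ and all m, n ∈ ℤ_p with m ≡ r (mod p) and n ≡ r (mod p): m ≡ n (mod p^k) if and only if f(m) ≡ f(n) (mod p^k); (ii) there exist a ∈ ℤ_p and a polynomial g with coefficients in ℤ_p such that a ≡ r (mod p), f(a) = 0, a is the only root of f in the residue class of r (every b ∈ ℤ_p with b ≡ r (mod p) and f(b) = 0 equals a), f(X) = (X − a)·g(X), and g(r) is a unit of ℤ_p. -/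
/-!
If `f` is suitable, comparing `f(r + p)` with `f(r)` modulo `p²` shows that `f'(r)` is a unit, so
Hensel's lemma produces a root `a ≡ r (mod p)`, unique in that residue class; writing
`f = (X - a) g` gives `g(a) = f'(a)`, a unit, hence `g(r)` is a unit. Conversely, if
`f = (X - a) g` with `g(r)` a unit, then `f(m) - f(n) = (m - n) u` with `u ≡ g(r) (mod p)`,
so `u` is a unit and `m - n`, `f(m) - f(n)` have the same divisors.
-/

open Polynomial

section LocalRing

variable {R : Type*} [CommRing R] [IsLocalRing R] {π : R}

theorem IsLocalRing.isUnit_of_dvd_sub (hπ : ¬IsUnit π) {a b : R} (ha : IsUnit a)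
    (h : π ∣ b - a) : IsUnit b := by
  have hab : ¬IsUnit (a - b) := fun hu => hπ (isUnit_of_dvd_unit (dvd_sub_comm.mp h) hu)
  refine (IsLocalRing.isUnit_or_isUnit_of_isUnit_add (a := b) ?_).resolve_right hab
  rwa [add_sub_cancel]

theorem Polynomial.isUnit_eval_of_dvd_sub (hπ : ¬IsUnit π) {g : R[X]} {x y : R}
    (hx : IsUnit (g.eval x)) (h : π ∣ y - x) : IsUnit (g.eval y) :=
  IsLocalRing.isUnit_of_dvd_sub hπ hx (h.trans (sub_dvd_eval_sub y x g))

theorem Polynomial.dvd_sub_iff_dvd_eval_X_sub_C_mul_sub (hπ : ¬IsUnit π) {g : R[X]}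
    {a r m n : R} (hg : IsUnit (g.eval r)) (ha : π ∣ a - r) (hm : π ∣ m - r) (hn : π ∣ n - r)
    (d : R) : d ∣ m - n ↔ d ∣ ((X - C a) * g).eval m - ((X - C a) * g).eval n := by
  obtain ⟨c, hc⟩ := sub_dvd_eval_sub m n g
  have hfactor : ((X - C a) * g).eval m - ((X - C a) * g).eval n =
      (m - n) * (g.eval m + (n - a) * c) := by
    simp only [eval_mul, eval_sub, eval_X, eval_C]
    linear_combination (n - a) * hc
  have hna : π ∣ n - a := by simpa using dvd_sub hn ha
  have hu : IsUnit (g.eval m + (n - a) * c) :=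
    IsLocalRing.isUnit_of_dvd_sub hπ (isUnit_eval_of_dvd_sub hπ hg hm)
      (by simpa using hna.mul_right c)
  rw [hfactor, hu.dvd_mul_right]

end LocalRing

theorem Polynomial.sq_dvd_eval_add_sub_eval_of_dvd_derivative {R : Type*} [CommRing R]
    (f : R[X]) (x : R) {π : R} (h : π ∣ f.derivative.eval x) :
    π ^ 2 ∣ f.eval (x + π) - f.eval x := by
  obtain ⟨c, hc⟩ := f.binomExpansion x π
  obtain ⟨d, hd⟩ := h
  exact ⟨d + c, by rw [hc, hd]; ring⟩

theorem Polynomial.eval_derivative_X_sub_C_mul {R : Type*} [CommRing R] (a : R) (g : R[X]) :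
    ((X - C a) * g).derivative.eval a = g.eval a := by
  simp [derivative_mul]

namespace PadicInt

variable {p : ℕ} [Fact p.Prime]

theorem not_isUnit_iff_dvd {x : ℤ_[p]} : ¬IsUnit x ↔ (p : ℤ_[p]) ∣ x :=
  not_isUnit_iff.trans (norm_lt_one_iff_dvd x)

theorem existsUnique_root_of_dvd_eval (f : ℤ_[p][X]) {x : ℤ_[p]}
    (hf : (p : ℤ_[p]) ∣ f.eval x) (hf' : IsUnit (f.derivative.eval x)) :
    ∃! a : ℤ_[p], (p : ℤ_[p]) ∣ a - x ∧ f.eval a = 0 := by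
  rw [isUnit_iff] at hf'
  have hnorm : ‖f.aeval x‖ < ‖f.derivative.aeval x‖ ^ 2 := by
    simpa [hf'] using (norm_lt_one_iff_dvd _).mpr hf
  obtain ⟨a, hfa, hdist, -, huniq⟩ := hensels_lemma hnorm
  simp only [coe_aeval_eq_eval, hf', norm_lt_one_iff_dvd] at hfa hdist huniq
  exact ⟨a, ⟨hdist, hfa⟩, fun b ⟨hb, hfb⟩ => huniq b hfb hb⟩

end PadicInt

theorem stmt11_general (p : ℕ) [Fact p.Prime] (r : ℕ) (f : Polynomial ℤ_[p])
    (hfr : (p : ℤ_[p]) ∣ f.eval (r : ℤ_[p])) :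
    (∀ k : ℕ, ∀ m n : ℤ_[p],
        (p : ℤ_[p]) ∣ m - (r : ℤ_[p]) → (p : ℤ_[p]) ∣ n - (r : ℤ_[p]) →
        ((p : ℤ_[p]) ^ k ∣ m - n ↔ (p : ℤ_[p]) ^ k ∣ f.eval m - f.eval n)) ↔
    (∃ (a : ℤ_[p]) (g : Polynomial ℤ_[p]),
        (p : ℤ_[p]) ∣ a - (r : ℤ_[p]) ∧ f.eval a = 0 ∧
        (∀ b : ℤ_[p], (p : ℤ_[p]) ∣ b - (r : ℤ_[p]) → f.eval b = 0 → b = a) ∧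
        f = (Polynomial.X - Polynomial.C a) * g ∧ IsUnit (g.eval (r : ℤ_[p]))) := by
  have hp : ¬IsUnit (p : ℤ_[p]) := PadicInt.prime_p.not_isUnit
  constructor
  · intro hsuit
    have hf' : IsUnit (f.derivative.eval (r : ℤ_[p])) := by
      by_contra h
      have hsq := (hsuit 2 (r + p) r (by simp) (by simp)).mpr
        (sq_dvd_eval_add_sub_eval_of_dvd_derivative f r (PadicInt.not_isUnit_iff_dvd.mp h))
      rw [add_sub_cancel_left] at hsq
      have h21 : 2 ≤ 1 :=
        (pow_dvd_pow_iff PadicInt.prime_p.ne_zero hp).mp (by simpa using hsq)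
      omega
    obtain ⟨a, ⟨har, hfa⟩, huniq⟩ := PadicInt.existsUnique_root_of_dvd_eval f hfr hf'
    have hfg : f = (X - C a) * (f /ₘ (X - C a)) := (mul_divByMonic_eq_iff_isRoot.mpr hfa).symm
    have hga : IsUnit ((f /ₘ (X - C a)).eval a) := by
      rw [← eval_derivative_X_sub_C_mul, ← hfg]
      exact isUnit_eval_of_dvd_sub hp hf' har
    exact ⟨a, _, har, hfa, fun b hb hfb => huniq b ⟨hb, hfb⟩, hfg,
      isUnit_eval_of_dvd_sub hp hga (dvd_sub_comm.mp har)⟩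
  · rintro ⟨a, g, ha, -, -, rfl, hg⟩ k m n hm hn
    exact dvd_sub_iff_dvd_eval_X_sub_C_mul_sub hp hg ha hm hn _

/-- **Characterization of `(p,r)`-suitable polynomials via their unique root**
(`TSuitFUnRootEq`). Let `f ∈ ℤ_p[x]` with `p ∣ f(r)`. Then `f` is `(p,r)`-suitable
(for every `k` and all `m, n ≡ r (mod p)`: `m ≡ n (mod p^k) ↔ f(m) ≡ f(n) (mod p^k)`)
iff there are `a ∈ ℤ_p` and `g ∈ ℤ_p[x]` with `a ≡ r (mod p)`, `f(a) = 0`, `a` the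
only root of `f` in the residue class of `r`, `f = (X − a)·g`, and `g(r)` a unit. -/
theorem stmt11 (p : ℕ) [Fact p.Prime] (r : ℕ) (hr : r < p) (f : Polynomial ℤ_[p])
    (hfr : (p : ℤ_[p]) ∣ f.eval (r : ℤ_[p])) :
    (∀ k : ℕ, ∀ m n : ℤ_[p],
        (p : ℤ_[p]) ∣ m - (r : ℤ_[p]) → (p : ℤ_[p]) ∣ n - (r : ℤ_[p]) →
        ((p : ℤ_[p]) ^ k ∣ m - n ↔ (p : ℤ_[p]) ^ k ∣ f.eval m - f.eval n)) ↔
    (∃ (a : ℤ_[p]) (g : Polynomial ℤ_[p]),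
        (p : ℤ_[p]) ∣ a - (r : ℤ_[p]) ∧ f.eval a = 0 ∧
        (∀ b : ℤ_[p], (p : ℤ_[p]) ∣ b - (r : ℤ_[p]) → f.eval b = 0 → b = a) ∧
        f = (Polynomial.X - Polynomial.C a) * g ∧ IsUnit (g.eval (r : ℤ_[p]))) :=
  stmt11_general p r f hfr
end

section
/- Let p be a prime and R_0, …, R_{p−1} : ℚ_p → ℚ_p functions such that: (a) for every r ∈ {0,…,p−1} and every x ∈ ℤ_p with x ≡ r (mod p), R_r(x) lies in p·ℤ_p; (b) avoidance: for every r ∈ {0,…,p−1} and every x ∈ ℚ_p with ‖x − r‖ ≥ 1 (i.e., x ∉ r + pℤ_p), one has ‖R_r(x)‖ ≥ 1 (i.e., R_r(x) ∉ pℤ_p); (c) the function F : ℤ_p → ℤ_p determined by p·F(x) = R_r(x) whenever x ≡ r (mod p) is a p-adic system. For a finite word D = (d_0,…,d_{k−1}) over {0,…,p−1} define Φ_D : ℚ_p → ℚ_p recursively by Φ_∅ = id and Φ_{(d_0,…,d_j)}(x) = R_{d_j}(Φ_{(d_0,…,d_{j−1})}(x))/p. Then for every nonempty word D there exists exactly one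 x ∈ ℤ_p with Φ_D(x) = x. -/
/-- The composition `Φ_D` of the branch maps `x ↦ R d x / p` along the digit word `D`
(the first letter of `D` is applied first):
`Φ_∅ = id` and `Φ_{(d₀,…,d_j)}(x) = R_{d_j}(Φ_{(d₀,…,d_{j−1})}(x)) / p`. -/
noncomputable def PhiR (p : ℕ) [Fact p.Prime] (R : Fin p → ℚ_[p] → ℚ_[p]) :
    List (Fin p) → ℚ_[p] → ℚ_[p]
  | [] => fun x => x
  | d :: D => fun x => PhiR p R D (R d x / (p : ℚ_[p]))

section Aux
variable {p : ℕ} [hp : Fact p.Prime] {R : Fin p → ℚ_[p] → ℚ_[p]} {F : ℤ_[p] → ℤ_[p]}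

lemma phiR_cons (R : Fin p → ℚ_[p] → ℚ_[p]) (d : Fin p) (D : List (Fin p)) (x : ℚ_[p]) :
    PhiR p R (d :: D) x = PhiR p R D (R d x / (p : ℚ_[p])) := rfl


lemma toZMod_eq_iff {a b : ℤ_[p]} :
    PadicInt.toZMod a = PadicInt.toZMod b ↔ (p : ℤ_[p]) ∣ a - b := by
  rw [← sub_eq_zero, ← map_sub, ← RingHom.mem_ker, PadicInt.ker_toZMod,
    PadicInt.maximalIdeal_eq_span_p, Ideal.mem_span_singleton]

lemma pow_dvd_iff_norm {a : ℤ_[p]} {n : ℕ} :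
    (p : ℤ_[p]) ^ n ∣ a ↔ ‖a‖ ≤ ((p : ℝ)⁻¹) ^ n := by
  rw [← Ideal.mem_span_singleton, ← PadicInt.norm_le_pow_iff_mem_span_pow]
  rw [zpow_neg, zpow_natCast, inv_pow]

lemma eq_of_forall_pow_dvd {a b : ℤ_[p]} (h : ∀ n : ℕ, (p : ℤ_[p]) ^ n ∣ a - b) : a = b := by
  have hp1 : (1:ℝ) < p := by exact_mod_cast hp.out.one_lt
  by_contra hne
  have hpos : 0 < ‖a - b‖ := by
    simp [norm_pos_iff, sub_eq_zero, hne]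
  obtain ⟨n, hn⟩ := exists_pow_lt_of_lt_one hpos (by
    rw [inv_lt_one_iff₀]; right; exact hp1 : (p:ℝ)⁻¹ < 1)
  exact absurd (pow_dvd_iff_norm.mp (h n)) (not_le.mpr hn)

lemma step_eq (hFR : ∀ x : ℤ_[p], ∀ r : Fin p, (p : ℤ_[p]) ∣ x - ((r : ℕ) : ℤ_[p]) →
      (p : ℚ_[p]) * (F x : ℚ_[p]) = R r (x : ℚ_[p]))
    {x : ℤ_[p]} {d : Fin p} (h : (p : ℤ_[p]) ∣ x - ((d : ℕ) : ℤ_[p])) :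
    R d (x : ℚ_[p]) / (p : ℚ_[p]) = (F x : ℚ_[p]) := by
  have hp0 : (p : ℚ_[p]) ≠ 0 := Nat.cast_ne_zero.mpr hp.out.ne_zero
  rw [← hFR x d h, mul_div_cancel_left₀ _ hp0]

lemma escape (havoid : ∀ r : Fin p, ∀ x : ℚ_[p], 1 ≤ ‖x - ((r : ℕ) : ℚ_[p])‖ → 1 ≤ ‖R r x‖) :
    ∀ (D : List (Fin p)) (y : ℚ_[p]), 1 < ‖y‖ → 1 < ‖PhiR p R D y‖ := by
  intro D
  induction D with
  | nil => intro y hy; exact hy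
  | cons d D ih =>
    intro y hy
    have hp1 : (1:ℝ) < p := by exact_mod_cast hp.out.one_lt
    have hd1 : ‖((d:ℕ) : ℚ_[p])‖ ≤ 1 := by
      have := Padic.norm_int_le_one (p := p) ((d:ℕ) : ℤ)
      push_cast at this
      exact this
    have hne : ‖y‖ ≠ ‖-((d:ℕ) : ℚ_[p])‖ := by
      rw [norm_neg]; exact (lt_of_le_of_lt hd1 hy).ne'
    have hsub : ‖y - ((d:ℕ) : ℚ_[p])‖ = ‖y‖ := by
      rw [sub_eq_add_neg, Padic.add_eq_max_of_ne hne, norm_neg,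
        max_eq_left (hd1.trans hy.le)]
    have hR : 1 ≤ ‖R d y‖ := havoid d y (by rw [hsub]; exact hy.le)
    have hdiv : 1 < ‖R d y / (p : ℚ_[p])‖ := by
      rw [norm_div, Padic.norm_p, div_eq_mul_inv, inv_inv]
      calc (1:ℝ) < p := hp1
      _ = 1 * p := (one_mul _).symm
      _ ≤ ‖R d y‖ * p := by
        apply mul_le_mul_of_nonneg_right hR (by positivity)
    rw [phiR_cons]
    exact ih _ hdiv

lemma phi_eq_iterate (hFR : ∀ x : ℤ_[p], ∀ r : Fin p, (p : ℤ_[p]) ∣ x - ((r : ℕ) : ℤ_[p]) →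
      (p : ℚ_[p]) * (F x : ℚ_[p]) = R r (x : ℚ_[p])) :
    ∀ (D : List (Fin p)) (x : ℤ_[p]),
      (∀ i (hi : i < D.length), (p : ℤ_[p]) ∣ F^[i] x - ((D.get ⟨i, hi⟩ : ℕ) : ℤ_[p])) →
      PhiR p R D (x : ℚ_[p]) = (F^[D.length] x : ℚ_[p]) := by
  intro D
  induction D with
  | nil => intro x _; simp [PhiR]
  | cons d D ih =>
    intro x h
    have h0 : (p : ℤ_[p]) ∣ x - ((d : ℕ) : ℤ_[p]) := by
      simpa using h 0 (by simp)
    rw [phiR_cons, step_eq hFR h0, ih (F x) (fun i hi => by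
      simpa [Function.iterate_succ_apply] using h (i+1) (by simpa using Nat.succ_lt_succ hi))]
    simp [Function.iterate_succ_apply]

lemma digits_of_phi (havoid : ∀ r : Fin p, ∀ x : ℚ_[p], 1 ≤ ‖x - ((r : ℕ) : ℚ_[p])‖ → 1 ≤ ‖R r x‖)
    (hFR : ∀ x : ℤ_[p], ∀ r : Fin p, (p : ℤ_[p]) ∣ x - ((r : ℕ) : ℤ_[p]) →
      (p : ℚ_[p]) * (F x : ℚ_[p]) = R r (x : ℚ_[p])) :
    ∀ (D : List (Fin p)) (x z : ℤ_[p]), PhiR p R D (x : ℚ_[p]) = (z : ℚ_[p]) →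
      ∀ i (hi : i < D.length), (p : ℤ_[p]) ∣ F^[i] x - ((D.get ⟨i, hi⟩ : ℕ) : ℤ_[p]) := by
  intro D
  induction D with
  | nil => intro x z _ i hi; exact absurd hi (by simp)
  | cons d D ih =>
    intro x z hxz i hi
    by_cases hd : (p : ℤ_[p]) ∣ x - ((d : ℕ) : ℤ_[p])
    · match i with
      | 0 => simpa using hd
      | (j+1) =>
        rw [phiR_cons, step_eq hFR hd] at hxz
        have := ih (F x) z hxz j (by simpa using Nat.lt_of_succ_lt_succ hi)
        simpa [Function.iterate_succ_apply] using this
    · exfalso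
      have hnorm1 : ‖x - ((d : ℕ) : ℤ_[p])‖ = 1 := by
        have hle := PadicInt.norm_le_one (x - ((d : ℕ) : ℤ_[p]))
        have := (PadicInt.norm_lt_one_iff_dvd (x - ((d : ℕ) : ℤ_[p]))).not.mpr hd
        exact le_antisymm hle (not_lt.mp this)
      have hnormQ : (1:ℝ) ≤ ‖(x : ℚ_[p]) - ((d : ℕ) : ℚ_[p])‖ := by
        have : ((x - ((d : ℕ) : ℤ_[p]) : ℤ_[p]) : ℚ_[p]) = (x : ℚ_[p]) - ((d : ℕ) : ℚ_[p]) := by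
          push_cast; ring
        rw [← this, ← PadicInt.norm_def, hnorm1]
      have hR := havoid d _ hnormQ
      have hp1 : (1:ℝ) < p := by exact_mod_cast hp.out.one_lt
      have hdiv : 1 < ‖R d (x : ℚ_[p]) / (p : ℚ_[p])‖ := by
        rw [norm_div, Padic.norm_p, div_eq_mul_inv, inv_inv]
        calc (1:ℝ) < p := hp1
        _ = 1 * p := (one_mul _).symm
        _ ≤ ‖R d (x : ℚ_[p])‖ * p := by
          apply mul_le_mul_of_nonneg_right hR (by positivity)
      have := escape havoid D _ hdiv
      rw [phiR_cons] at hxz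
      rw [hxz, ← PadicInt.norm_def] at this
      exact absurd (PadicInt.norm_le_one z) (not_le.mpr this)

end Aux

section Aux2
variable {p : ℕ} [hp : Fact p.Prime] {F : ℤ_[p] → ℤ_[p]}

lemma exists_approx_s12
    (hblock : ∀ k : ℕ, ∀ m n : ℤ_[p],
      (∀ i : ℕ, i < k → (p : ℤ_[p]) ∣ F^[i] m - F^[i] n) ↔ (p : ℤ_[p]) ^ k ∣ m - n)
    (δ : ℕ → Fin p) (n : ℕ) :
    ∃ x : ℤ_[p], ∀ i < n, (p : ℤ_[p]) ∣ F^[i] x - ((δ i : ℕ) : ℤ_[p]) := by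
  haveI : NeZero (p ^ n) := ⟨pow_ne_zero n hp.out.ne_zero⟩
  set g : ZMod (p ^ n) → (Fin n → ZMod p) :=
    fun a i => PadicInt.toZMod (F^[(i : ℕ)] ((a.val : ℕ) : ℤ_[p])) with hg
  have hinj : Function.Injective g := by
    intro a b hab
    have hdig : ∀ i < n, (p : ℤ_[p]) ∣ F^[i] ((a.val : ℕ) : ℤ_[p]) - F^[i] ((b.val : ℕ) : ℤ_[p]) :=
      fun i hi => toZMod_eq_iff.mp (congrFun hab ⟨i, hi⟩)
    have hpow := (hblock n _ _).mp hdig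
    have heq : PadicInt.toZModPow n ((a.val : ℕ) : ℤ_[p])
        = PadicInt.toZModPow n ((b.val : ℕ) : ℤ_[p]) := by
      rw [← sub_eq_zero, ← map_sub, ← RingHom.mem_ker, PadicInt.ker_toZModPow,
        Ideal.mem_span_singleton]
      exact hpow
    rw [map_natCast, map_natCast, ZMod.natCast_rightInverse a, ZMod.natCast_rightInverse b] at heq
    exact heq
  have hcard : Fintype.card (ZMod (p ^ n)) = Fintype.card (Fin n → ZMod p) := by
    simp [ZMod.card, Fintype.card_fun, ZMod.card p]
  have hsurj : Function.Surjective g :=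
    ((Fintype.bijective_iff_injective_and_card g).mpr ⟨hinj, hcard⟩).surjective
  obtain ⟨a, ha⟩ := hsurj (fun i => ((δ (i : ℕ) : ℕ) : ZMod p))
  refine ⟨((a.val : ℕ) : ℤ_[p]), fun i hi => ?_⟩
  apply toZMod_eq_iff.mp
  rw [map_natCast]
  exact congrFun ha ⟨i, hi⟩

end Aux2

/-- **Generalized Hensel's Lemma for avoiding `p`-fibred rational functions**
(`TAvoidFRFUnFP`). Let `R 0, …, R (p−1) : ℚ_p → ℚ_p` with: (a) `R r x ∈ pℤ_p`
(i.e. `‖R r x‖ < 1`) for every `x ∈ ℤ_p` with `x ≡ r (mod p)`; (b) avoidance: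
`‖R r x‖ ≥ 1` whenever `‖x − r‖ ≥ 1`; (c) the function `F : ℤ_p → ℤ_p` determined by
`p · F x = R r x` for `x ≡ r (mod p)` is a `p`-adic system. Then for every nonempty
word `D` over `{0,…,p−1}` the map `Φ_D` has exactly one fixed point in `ℤ_p`. -/
theorem stmt12 (p : ℕ) [Fact p.Prime] (R : Fin p → ℚ_[p] → ℚ_[p]) (F : ℤ_[p] → ℤ_[p])
    (hval : ∀ r : Fin p, ∀ x : ℤ_[p], (p : ℤ_[p]) ∣ x - ((r : ℕ) : ℤ_[p]) →
      ‖R r (x : ℚ_[p])‖ < 1)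
    (havoid : ∀ r : Fin p, ∀ x : ℚ_[p], 1 ≤ ‖x - ((r : ℕ) : ℚ_[p])‖ → 1 ≤ ‖R r x‖)
    (hFR : ∀ x : ℤ_[p], ∀ r : Fin p, (p : ℤ_[p]) ∣ x - ((r : ℕ) : ℤ_[p]) →
      (p : ℚ_[p]) * (F x : ℚ_[p]) = R r (x : ℚ_[p]))
    (hblock : ∀ k : ℕ, ∀ m n : ℤ_[p],
      (∀ i : ℕ, i < k → (p : ℤ_[p]) ∣ F^[i] m - F^[i] n) ↔ (p : ℤ_[p]) ^ k ∣ m - n) :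
    ∀ D : List (Fin p), D ≠ [] →
      ∃! x : ℤ_[p], PhiR p R D (x : ℚ_[p]) = (x : ℚ_[p]) := by
  intro D hD
  have hp1 : (1 : ℝ) < p := by exact_mod_cast (Fact.out : p.Prime).one_lt
  set k := D.length with hkdef
  have hk : 0 < k := List.length_pos_iff.mpr hD
  set δ : ℕ → Fin p := fun i => D.get ⟨i % k, Nat.mod_lt _ hk⟩ with hδ
  -- approximations
  choose x hx using exists_approx_s12 hblock δ
  have coh : ∀ m n : ℕ, n ≤ m → (p : ℤ_[p]) ^ n ∣ x m - x n := by
    intro m n hnm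
    apply (hblock n _ _).mp
    intro i hi
    have h1 := hx m i (lt_of_lt_of_le hi hnm)
    have h2 := hx n i hi
    have := dvd_sub h1 h2
    simpa using this
  have hinv1 : (p : ℝ)⁻¹ < 1 := by rw [inv_lt_one_iff₀]; right; exact hp1
  have hc : CauchySeq x := by
    apply cauchySeq_of_le_geometric ((p : ℝ)⁻¹) 1 hinv1
    intro i
    rw [one_mul, dist_eq_norm, norm_sub_rev]
    exact pow_dvd_iff_norm.mp (coh (i + 1) i (Nat.le_succ i))
  obtain ⟨L, hL⟩ := cauchySeq_tendsto_of_complete hc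
  have approx : ∀ n : ℕ, (p : ℤ_[p]) ^ n ∣ L - x n := by
    intro n
    rw [pow_dvd_iff_norm]
    have ht : Filter.Tendsto (fun m => ‖x m - x n‖) Filter.atTop (nhds ‖L - x n‖) :=
      (hL.sub tendsto_const_nhds).norm
    apply le_of_tendsto ht
    filter_upwards [Filter.eventually_ge_atTop n] with m hm
    exact pow_dvd_iff_norm.mp (coh m n hm)
  have digL : ∀ i : ℕ, (p : ℤ_[p]) ∣ F^[i] L - ((δ i : ℕ) : ℤ_[p]) := by
    intro i
    have h1 := (hblock (i + 1) L (x (i + 1))).mpr (approx (i + 1)) i (Nat.lt_succ_self i)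
    have h2 := hx (i + 1) i (Nat.lt_succ_self i)
    have := dvd_add h1 h2
    rwa [sub_add_sub_cancel] at this
  have period : F^[k] L = L := by
    apply eq_of_forall_pow_dvd
    intro n
    apply (hblock n _ _).mp
    intro i _
    have h1 : F^[i] (F^[k] L) = F^[i + k] L := (Function.iterate_add_apply F i k L).symm
    have h2 := digL (i + k)
    have h3 := digL i
    have hδeq : δ (i + k) = δ i := by
      simp only [hδ, Nat.add_mod_right]
    rw [hδeq] at h2
    rw [h1]
    have := dvd_sub h2 h3
    simpa using this
  -- all-digit lemma from periodicity
  have alldig : ∀ y : ℤ_[p], (∀ i (hi : i < k), (p : ℤ_[p]) ∣ F^[i] y - ((D.get ⟨i, hi⟩ : ℕ) : ℤ_[p])) →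
      F^[k] y = y → ∀ i : ℕ, (p : ℤ_[p]) ∣ F^[i] y - ((δ i : ℕ) : ℤ_[p]) := by
    intro y hdig hper i
    have hiter : F^[i] y = F^[i % k] y := by
      conv_lhs => rw [← Nat.mod_add_div i k]
      rw [Function.iterate_add_apply, Function.iterate_mul]
      rw [Function.iterate_fixed hper]
    rw [hiter]
    exact hdig (i % k) (Nat.mod_lt _ hk)
  -- digits of L for i < k
  have digLk : ∀ i (hi : i < k), (p : ℤ_[p]) ∣ F^[i] L - ((D.get ⟨i, hi⟩ : ℕ) : ℤ_[p]) := by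
    intro i hi
    have := digL i
    have : δ i = D.get ⟨i, hi⟩ := by
      simp only [hδ]
      congr 1
      exact Fin.ext (Nat.mod_eq_of_lt hi)
    rw [← this]
    exact digL i
  refine ⟨L, ?_, ?_⟩
  · show PhiR p R D (L : ℚ_[p]) = (L : ℚ_[p])
    rw [phi_eq_iterate hFR D L digLk, ← hkdef, period]
  · intro y hy
    have digyk := digits_of_phi havoid hFR D y y hy
    have hFky : F^[k] y = y := by
      have := phi_eq_iterate hFR D y digyk
      rw [hy] at this
      rw [hkdef]
      exact Subtype.coe_injective this.symm
    have hy_all := alldig y digyk hFky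
    have hL_all : ∀ i : ℕ, (p : ℤ_[p]) ∣ F^[i] L - ((δ i : ℕ) : ℤ_[p]) := digL
    apply eq_of_forall_pow_dvd
    intro n
    apply (hblock n _ _).mp
    intro i _
    have := dvd_sub (hy_all i) (hL_all i)
    simpa using this
end

section
/- Let p be a prime, a, b : {0,…,p−1} → ℤ_p with every b(r) a unit of ℤ_p, and let F : ℤ_p → ℤ_p satisfy p·F(x) = a(r) + b(r)·x whenever x ≡ r (mod p) (so F is a linear-polynomial p-adic system in weak canonical form). Let n ∈ ℤ_p, let d : ℕ → {0,…,p−1} satisfy F^i(n) ≡ d(i) (mod p) for all i ∈ ℕ (d is the F-digit expansion of n), and suppose F^{k+ℓ}(n) = F^k(n) for some k ∈ ℕ and ℓ ≥ 1. Then, writing A_I = Σ_{i<k} a(d(i))·p^i·∏_{j=i+1}^{k−1} b(d(j)), B_I = ∏_{i<k} b(d(i)), A_P = Σ_{i<ℓ} a(d(k+i))·p^i·∏_{j=i+1}^{ℓ−1} b(d(k+j)), and B_P = ∏_{i<ℓ} b(d(k+i)), one has (p^ℓ − B_P)·B_I·n = A_P·p^k − (p^ℓ − B_P)·A_I. -/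
/-- **The defining equation of elements with ultimately periodic digit expansion with
respect to a linear-polynomial `p`-adic system** (`CPerFormula`). Let `F` be the
linear-polynomial `p`-adic system in weak canonical form with branches
`x ↦ (a r + b r · x)/p` (each `b r` a unit), `n ∈ ℤ_p`, `d` the `F`-digit expansion of
`n` (so `F^[i] n ≡ d i (mod p)`), and suppose `F^[k+ℓ] n = F^[k] n` with `ℓ ≥ 1`.
Then, with `A_I, B_I, A_P, B_P` the associated coefficient sums/products,
`(p^ℓ − B_P)·B_I·n = A_P·p^k − (p^ℓ − B_P)·A_I`. -/
theorem stmt15 (p : ℕ) [Fact p.Prime] (a b : Fin p → ℤ_[p])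
    (hb : ∀ r : Fin p, IsUnit (b r))
    (F : ℤ_[p] → ℤ_[p])
    (hF : ∀ x : ℤ_[p], ∀ r : Fin p, (p : ℤ_[p]) ∣ x - ((r : ℕ) : ℤ_[p]) →
      (p : ℤ_[p]) * F x = a r + b r * x)
    (n : ℤ_[p]) (d : ℕ → Fin p)
    (hd : ∀ i : ℕ, (p : ℤ_[p]) ∣ F^[i] n - ((d i : ℕ) : ℤ_[p]))
    (k ℓ : ℕ) (hℓ : 1 ≤ ℓ) (hper : F^[k + ℓ] n = F^[k] n) :
    ((p : ℤ_[p]) ^ ℓ - ∏ i ∈ Finset.range ℓ, b (d (k + i))) *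
        (∏ i ∈ Finset.range k, b (d i)) * n =
      (∑ i ∈ Finset.range ℓ, a (d (k + i)) * (p : ℤ_[p]) ^ i *
          ∏ j ∈ Finset.Ico (i + 1) ℓ, b (d (k + j))) * (p : ℤ_[p]) ^ k -
        ((p : ℤ_[p]) ^ ℓ - ∏ i ∈ Finset.range ℓ, b (d (k + i))) *
          ∑ i ∈ Finset.range k, a (d i) * (p : ℤ_[p]) ^ i *
            ∏ j ∈ Finset.Ico (i + 1) k, b (d j) := by
  have key : ∀ m s : ℕ, (p : ℤ_[p]) ^ m * F^[s + m] n =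
      (∏ i ∈ Finset.range m, b (d (s + i))) * F^[s] n +
        ∑ i ∈ Finset.range m, a (d (s + i)) * (p : ℤ_[p]) ^ i *
          ∏ j ∈ Finset.Ico (i + 1) m, b (d (s + j)) := by
    intro m s
    induction m with
    | zero => simp
    | succ m ih =>
      have hstep := hF (F^[s + m] n) (d (s + m)) (hd (s + m))
      have hit : F^[s + (m + 1)] n = F (F^[s + m] n) := by
        rw [show s + (m + 1) = (s + m) + 1 from rfl, Function.iterate_succ_apply']
      have hsum : ∑ i ∈ Finset.range (m + 1), a (d (s + i)) * (p : ℤ_[p]) ^ i *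
            ∏ j ∈ Finset.Ico (i + 1) (m + 1), b (d (s + j)) =
          b (d (s + m)) * (∑ i ∈ Finset.range m, a (d (s + i)) * (p : ℤ_[p]) ^ i *
            ∏ j ∈ Finset.Ico (i + 1) m, b (d (s + j))) + a (d (s + m)) * (p : ℤ_[p]) ^ m := by
        rw [Finset.sum_range_succ, Finset.mul_sum]
        simp only [Finset.Ico_self, Finset.prod_empty, mul_one]
        congr 1
        refine Finset.sum_congr rfl fun i hi => ?_
        rw [Finset.prod_Ico_succ_top (Finset.mem_range.mp hi)]
        ring
      rw [hsum, Finset.prod_range_succ, hit, pow_succ]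
      calc (p : ℤ_[p]) ^ m * (p : ℤ_[p]) * F (F^[s + m] n)
          = (p : ℤ_[p]) ^ m * ((p : ℤ_[p]) * F (F^[s + m] n)) := by ring
        _ = (p : ℤ_[p]) ^ m * (a (d (s + m)) + b (d (s + m)) * F^[s + m] n) := by rw [hstep]
        _ = a (d (s + m)) * (p : ℤ_[p]) ^ m +
            b (d (s + m)) * ((p : ℤ_[p]) ^ m * F^[s + m] n) := by ring
        _ = _ := by rw [ih]; ring
  have h1 := key k 0
  have h2 := key ℓ k
  simp only [zero_add, Function.iterate_zero_apply] at h1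
  rw [hper] at h2
  linear_combination (p : ℤ_[p]) ^ k * h2 -
    ((p : ℤ_[p]) ^ ℓ - ∏ i ∈ Finset.range ℓ, b (d (k + i))) * h1
end

section
/- Let a₀′, a₁′, a₀″, a₁″, b₀, b₁ ∈ ℤ_2 with b₀ and b₁ odd (units of ℤ_2), and let F, G : ℤ_2 → ℤ_2 satisfy for all x ∈ ℤ_2: 2·F(x) = a₀′ + b₀·x if 2 ∣ x and 2·F(x) = a₁′ + b₁·x if 2 ∤ x; and 2·G(x) = a₀″ + b₀·x if 2 ∣ x and 2·G(x) = a₁″ + b₁·x if 2 ∤ x (so F and G are linear-polynomial 2-adic systems in weak canonical form with the same linear coefficients). Then for all m, n ∈ ℤ_2: if G^k(n) ≡ F^k(m) (mod 2) for every k ∈ ℕ (i.e., the G-digit expansion of n equals the F-digit expansion of m, so n = π_{F,G}(m)), then ((b₀ − 2)·a₁′ − (b₁ − 2)·a₀′)·n = a₀′·a₁″ − a₁′·a₀″ + m·((b₀ − 2)·a₁″ − (b₁ − 2)·a₀″). -/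
private lemma stmt16_aux (x : ℤ_[2]) (h : ∀ k : ℕ, (2 : ℤ_[2])^k ∣ x) : x = 0 := by
  by_contra hx
  have hnorm : ∀ k : ℕ, ‖x‖ ≤ (2 : ℝ) ^ (-(k : ℤ)) := by
    intro k
    have := (PadicInt.norm_le_pow_iff_mem_span_pow x k).mpr
    rw [Ideal.mem_span_singleton] at this
    exact_mod_cast this (by exact_mod_cast h k)
  obtain ⟨k, hk⟩ := exists_pow_lt_of_lt_one (norm_pos_iff.mpr hx) (by norm_num : (1:ℝ)/2 < 1)
  have h2 : ‖x‖ ≤ ((1:ℝ)/2)^k := by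
    rw [one_div, inv_pow, ← zpow_natCast (2:ℝ) k, ← zpow_neg]
    exact hnorm k
  linarith

/-- **The constant coefficients are irrelevant: explicit formula for `π_{F,G}`**
(`TConstIrr`). Let `F, G : ℤ_2 → ℤ_2` be the linear-polynomial `2`-adic systems in
weak canonical form determined by `2·F x = a₀′ + b₀·x` (`x` even),
`2·F x = a₁′ + b₁·x` (`x` odd), `2·G x = a₀″ + b₀·x` (`x` even),
`2·G x = a₁″ + b₁·x` (`x` odd), with `b₀, b₁` units. If the `G`-digit expansion of `n`
equals the `F`-digit expansion of `m` (i.e. `G^[k] n ≡ F^[k] m (mod 2)` for all `k`,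
so `n = π_{F,G}(m)`), then
`((b₀−2)·a₁′ − (b₁−2)·a₀′)·n = a₀′·a₁″ − a₁′·a₀″ + m·((b₀−2)·a₁″ − (b₁−2)·a₀″)`. -/
theorem stmt16 (a₀' a₁' a₀'' a₁'' b₀ b₁ : ℤ_[2])
    (hb₀ : IsUnit b₀) (hb₁ : IsUnit b₁)
    (F G : ℤ_[2] → ℤ_[2])
    (hF0 : ∀ x : ℤ_[2], (2 : ℤ_[2]) ∣ x → (2 : ℤ_[2]) * F x = a₀' + b₀ * x)
    (hF1 : ∀ x : ℤ_[2], ¬(2 : ℤ_[2]) ∣ x → (2 : ℤ_[2]) * F x = a₁' + b₁ * x)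
    (hG0 : ∀ x : ℤ_[2], (2 : ℤ_[2]) ∣ x → (2 : ℤ_[2]) * G x = a₀'' + b₀ * x)
    (hG1 : ∀ x : ℤ_[2], ¬(2 : ℤ_[2]) ∣ x → (2 : ℤ_[2]) * G x = a₁'' + b₁ * x) :
    ∀ m n : ℤ_[2], (∀ k : ℕ, (2 : ℤ_[2]) ∣ G^[k] n - F^[k] m) →
      ((b₀ - 2) * a₁' - (b₁ - 2) * a₀') * n =
        a₀' * a₁'' - a₁' * a₀'' + m * ((b₀ - 2) * a₁'' - (b₁ - 2) * a₀'') := by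
  set E : ℤ_[2] → ℤ_[2] → ℤ_[2] := fun m n =>
    ((b₀ - 2) * a₁' - (b₁ - 2) * a₀') * n - (a₀' * a₁'' - a₁' * a₀'')
      - m * ((b₀ - 2) * a₁'' - (b₁ - 2) * a₀'') with hE
  have key : ∀ k : ℕ, ∀ m n : ℤ_[2],
      (∀ j : ℕ, (2 : ℤ_[2]) ∣ G^[j] n - F^[j] m) → (2 : ℤ_[2])^k ∣ E m n := by
    intro k
    induction k with
    | zero => intro m n _; simpa using one_dvd _
    | succ k ih =>
      intro m n h
      have h0 : (2 : ℤ_[2]) ∣ n - m := by simpa using h 0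
      have hshift : ∀ j : ℕ, (2 : ℤ_[2]) ∣ G^[j] (G n) - F^[j] (F m) := by
        intro j
        simpa [Function.iterate_succ_apply] using h (j + 1)
      have ihe : (2 : ℤ_[2])^k ∣ E (F m) (G n) := ih (F m) (G n) hshift
      by_cases hm : (2 : ℤ_[2]) ∣ m
      · have hn : (2 : ℤ_[2]) ∣ n := by
          have := dvd_add h0 hm; simpa using this
        have hFm := hF0 m hm
        have hGn := hG0 n hn
        have heq : (2 : ℤ_[2]) * E (F m) (G n) = b₀ * E m n := by
          simp only [hE]
          linear_combination ((b₀ - 2) * a₁' - (b₁ - 2) * a₀') * hGn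
            - ((b₀ - 2) * a₁'' - (b₁ - 2) * a₀'') * hFm
        have hdvd : (2 : ℤ_[2])^(k+1) ∣ b₀ * E m n := by
          rw [← heq, pow_succ, mul_comm ((2:ℤ_[2])^k) 2]
          exact mul_dvd_mul_left 2 ihe
        exact (hb₀.dvd_mul_left).mp hdvd
      · have hn : ¬ (2 : ℤ_[2]) ∣ n := by
          intro hn
          exact hm (by simpa using dvd_sub hn h0)
        have hFm := hF1 m hm
        have hGn := hG1 n hn
        have heq : (2 : ℤ_[2]) * E (F m) (G n) = b₁ * E m n := by
          simp only [hE]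
          linear_combination ((b₀ - 2) * a₁' - (b₁ - 2) * a₀') * hGn
            - ((b₀ - 2) * a₁'' - (b₁ - 2) * a₀'') * hFm
        have hdvd : (2 : ℤ_[2])^(k+1) ∣ b₁ * E m n := by
          rw [← heq, pow_succ, mul_comm ((2:ℤ_[2])^k) 2]
          exact mul_dvd_mul_left 2 ihe
        exact (hb₁.dvd_mul_left).mp hdvd
  intro m n h
  have hz : E m n = 0 := stmt16_aux _ (fun k => key k m n h)
  simp only [hE] at hz
  linear_combination hz
end

section
/- Let b₀, b₁ ∈ ℤ_2 be odd (units of ℤ_2) and let F, G : ℤ_2 → ℤ_2 satisfy for all x ∈ ℤ_2: 2·F(x) = b₀·x if 2 ∣ x and 2·F(x) = 1 + b₁·x if 2 ∤ x; and 2·G(x) = b₁·x if 2 ∣ x and 2·G(x) = 1 + b₀·x if 2 ∤ x (so F and G are the linear-polynomial 2-adic systems with swapped linear coefficients). Then for all m, n ∈ ℤ_2: if for every k ∈ ℕ the residues of F^k(m) and G^k(n) modulo 2 differ (equivalently, F^k(m) + G^k(n) is odd for every k; the G-digit expansion of n is the digitwise complement of the F-digit expansion of m), then (2 − b₀)·n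 = 1 + m·(b₁ − 2). -/
/-!
Put `D(m, n) = (2 - b₀) n - (1 + m (b₁ - 2))`. When `m` and `n` have opposite parity, the defining
equations of `F` and `G` give `2 · D(F m, G n) = b · D(m, n)` with `b = b₀` (if `m` is even) or
`b = b₁` (if `m` is odd), a unit either way. Along orbits with complementary digits this holds at
every step, so `2 ^ k ∣ D(m, n)` for every `k`, and `D(m, n) = 0` because `ℤ_[2]` is `2`-adically
separated.
-/

namespace PadicInt

theorem eq_zero_of_forall_pow_dvd {p : ℕ} [Fact p.Prime] {x : ℤ_[p]}
    (h : ∀ k : ℕ, (p : ℤ_[p]) ^ k ∣ x) : x = 0 :=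
  ext_of_toZModPow.mp fun k => by
    rw [map_zero, ← RingHom.mem_ker, ker_toZModPow]
    exact Ideal.mem_span_singleton.mpr (h k)

theorem two_dvd_iff_toZMod_eq_zero {x : ℤ_[2]} : 2 ∣ x ↔ toZMod x = 0 := by
  rw [← RingHom.mem_ker, ker_toZMod, maximalIdeal_eq_span_p, Ideal.mem_span_singleton]
  norm_num

theorem two_dvd_add_of_not_two_dvd {x y : ℤ_[2]} (hx : ¬2 ∣ x) (hy : ¬2 ∣ y) :
    2 ∣ x + y := by
  rw [two_dvd_iff_toZMod_eq_zero] at *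
  rw [map_add]
  generalize toZMod x = a at *
  generalize toZMod y = b at *
  revert a b
  decide

end PadicInt

theorem pow_succ_dvd_of_mul_eq_unit_mul {R : Type*} [CommMonoid R] {a b x y : R} {k : ℕ}
    (hb : IsUnit b) (h : a * y = b * x) (hy : a ^ k ∣ y) : a ^ (k + 1) ∣ x :=
  hb.dvd_mul_left.mp (h ▸ pow_succ' a k ▸ mul_dvd_mul_left a hy)

section ComplementDefect

variable {R : Type*} [CommRing R] (b₀ b₁ : R)

def complementDefect (m n : R) : R := (2 - b₀) * n - (1 + m * (b₁ - 2))

variable {b₀ b₁}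

theorem two_mul_complementDefect_of_even {m n x y : R} (hx : 2 * x = b₀ * m)
    (hy : 2 * y = 1 + b₀ * n) :
    2 * complementDefect b₀ b₁ x y = b₀ * complementDefect b₀ b₁ m n := by
  unfold complementDefect
  linear_combination (2 - b₀) * hy - (b₁ - 2) * hx

theorem two_mul_complementDefect_of_odd {m n x y : R} (hx : 2 * x = 1 + b₁ * m)
    (hy : 2 * y = b₁ * n) :
    2 * complementDefect b₀ b₁ x y = b₁ * complementDefect b₀ b₁ m n := by
  unfold complementDefect
  linear_combination (2 - b₀) * hy - (b₁ - 2) * hx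

end ComplementDefect

theorem pow_two_dvd_complementDefect {b₀ b₁ : ℤ_[2]} (hb₀ : IsUnit b₀) (hb₁ : IsUnit b₁)
    {F G : ℤ_[2] → ℤ_[2]}
    (hF0 : ∀ x : ℤ_[2], 2 ∣ x → 2 * F x = b₀ * x)
    (hF1 : ∀ x : ℤ_[2], ¬2 ∣ x → 2 * F x = 1 + b₁ * x)
    (hG0 : ∀ x : ℤ_[2], 2 ∣ x → 2 * G x = b₁ * x)
    (hG1 : ∀ x : ℤ_[2], ¬2 ∣ x → 2 * G x = 1 + b₀ * x)
    {m n : ℤ_[2]} (hmn : ∀ j : ℕ, ¬2 ∣ F^[j] m + G^[j] n) (k : ℕ) :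
    2 ^ k ∣ complementDefect b₀ b₁ m n := by
  induction k generalizing m n with
  | zero => exact one_dvd _
  | succ k ih =>
    have hk := ih fun j => hmn (j + 1)
    have h0 : ¬2 ∣ m + n := hmn 0
    by_cases hm : 2 ∣ m
    · have hn : ¬2 ∣ n := fun hn => h0 (dvd_add hm hn)
      exact pow_succ_dvd_of_mul_eq_unit_mul hb₀
        (two_mul_complementDefect_of_even (hF0 m hm) (hG1 n hn)) hk
    · have hn : 2 ∣ n := by_contra fun hn => h0 (PadicInt.two_dvd_add_of_not_two_dvd hm hn)
      exact pow_succ_dvd_of_mul_eq_unit_mul hb₁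
        (two_mul_complementDefect_of_odd (hF1 m hm) (hG0 n hn)) hk

/-- **Swapping the linear coefficients: explicit formula for `π_{F,σ,G}`**
(`TOrderIrr`). Let `F, G : ℤ_2 → ℤ_2` be the linear-polynomial `2`-adic systems
determined by `2·F x = b₀·x` (`x` even), `2·F x = 1 + b₁·x` (`x` odd), and
`2·G x = b₁·x` (`x` even), `2·G x = 1 + b₀·x` (`x` odd), with `b₀, b₁` units (odd).
If for every `k` the residues of `F^[k] m` and `G^[k] n` modulo `2` differ
(equivalently `F^[k] m + G^[k] n` is odd for all `k`; the `G`-digit expansion of `n`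
is the digitwise complement of the `F`-digit expansion of `m`), then
`(2 − b₀)·n = 1 + m·(b₁ − 2)`. -/
theorem stmt17 (b₀ b₁ : ℤ_[2]) (hb₀ : IsUnit b₀) (hb₁ : IsUnit b₁)
    (F G : ℤ_[2] → ℤ_[2])
    (hF0 : ∀ x : ℤ_[2], (2 : ℤ_[2]) ∣ x → (2 : ℤ_[2]) * F x = b₀ * x)
    (hF1 : ∀ x : ℤ_[2], ¬(2 : ℤ_[2]) ∣ x → (2 : ℤ_[2]) * F x = 1 + b₁ * x)
    (hG0 : ∀ x : ℤ_[2], (2 : ℤ_[2]) ∣ x → (2 : ℤ_[2]) * G x = b₁ * x)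
    (hG1 : ∀ x : ℤ_[2], ¬(2 : ℤ_[2]) ∣ x → (2 : ℤ_[2]) * G x = 1 + b₀ * x) :
    ∀ m n : ℤ_[2], (∀ k : ℕ, ¬(2 : ℤ_[2]) ∣ (F^[k] m + G^[k] n)) →
      (2 - b₀) * n = 1 + m * (b₁ - 2) := by
  intro m n hmn
  have hdefect : complementDefect b₀ b₁ m n = 0 :=
    PadicInt.eq_zero_of_forall_pow_dvd fun k => by
      exact_mod_cast pow_two_dvd_complementDefect hb₀ hb₁ hF0 hF1 hG0 hG1 hmn k
  exact sub_eq_zero.mp hdefect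
end

section
/- Let p be a prime and a, b : {0,…,p−1} → ℤ integers with b(r) ≠ 0 and |b(r)| < p (archimedean absolute value) for every r. Let F : ℤ_p → ℤ_p satisfy: for every x ∈ ℤ_p and every r ∈ {0,…,p−1} with x ≡ r (mod p), there exists c ∈ {0,…,p−1} with p·F(x) = a(r) + b(r)·x − c (so F is the ℤ-linear-polynomial p-adic system with branches a(r) + b(r)·x; note that b(r) ≠ 0 and |b(r)| < p force p ∤ b(r)). Then for every n ∈ ℤ_p: the orbit of n under F is ultimately periodic — i.e., there exist k ∈ ℕ and ℓ ≥ 1 with F^{k+ℓ}(n) = F^k(n) — if and only if n is rational, i.e., there exists q ∈ ℚ whose image in ℚ_p equals n. -/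
/-- **Contractive `ℤ`-linear-polynomial `p`-adic systems are ultimately periodic
exactly on the rationals** (`CPerFormula` + `CLinPolyCEM`/`CConExpSummary (1)`).
Let `a, b : {0,…,p−1} → ℤ` with `b r ≠ 0` and `|b r| < p` for all `r`, and let `F` be
the `ℤ`-linear-polynomial `p`-adic system with branches `a r + b r · x`, i.e.
`p·F x = a r + b r · x − c` for the residue `c ∈ {0,…,p−1}` of `a r + b r · x`,
whenever `x ≡ r (mod p)`. Then for every `n ∈ ℤ_p`: the orbit of `n` under `F` is
ultimately periodic iff `n` is rational (the image of some `q ∈ ℚ` in `ℚ_p`). -/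
theorem stmt18 (p : ℕ) [Fact p.Prime] (a b : Fin p → ℤ)
    (hb : ∀ r : Fin p, b r ≠ 0 ∧ |b r| < (p : ℤ))
    (F : ℤ_[p] → ℤ_[p])
    (hF : ∀ x : ℤ_[p], ∀ r : Fin p, (p : ℤ_[p]) ∣ x - ((r : ℕ) : ℤ_[p]) →
      ∃ c : ℕ, c < p ∧
        (p : ℤ_[p]) * F x = (a r : ℤ_[p]) + (b r : ℤ_[p]) * x - (c : ℤ_[p])) :
    ∀ n : ℤ_[p], (∃ k ℓ : ℕ, 1 ≤ ℓ ∧ F^[k + ℓ] n = F^[k] n) ↔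
      ∃ q : ℚ, (q : ℚ_[p]) = (n : ℚ_[p]) := by
  intro n
  have hp : p.Prime := Fact.out
  have hp2 : (2 : ℤ) ≤ (p : ℤ) := by exact_mod_cast hp.two_le
  have hres : ∀ x : ℤ_[p], ∃ r : Fin p, (p : ℤ_[p]) ∣ x - ((r : ℕ) : ℤ_[p]) := by
    intro x
    refine ⟨⟨x.zmodRepr, x.zmodRepr_lt_p⟩, ?_⟩
    have h := PadicInt.sub_zmodRepr_mem x
    rwa [PadicInt.maximalIdeal_eq_span_p, Ideal.mem_span_singleton] at h
  have hstep : ∀ x : ℤ_[p], ∃ A B : ℤ, B ≠ 0 ∧ |B| ≤ (p : ℤ) - 1 ∧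
      (p : ℤ_[p]) * F x = (A : ℤ_[p]) + (B : ℤ_[p]) * x := by
    intro x
    obtain ⟨r, hr⟩ := hres x
    obtain ⟨c, hc, heq⟩ := hF x r hr
    refine ⟨a r - c, b r, (hb r).1, by linarith [(hb r).2], ?_⟩
    rw [heq]; push_cast; ring
  have claim : ∀ m : ℕ, ∀ x : ℤ_[p], ∃ A C : ℤ, C ≠ 0 ∧ |C| ≤ ((p : ℤ) - 1) ^ m ∧
      (p : ℤ_[p]) ^ m * F^[m] x = (A : ℤ_[p]) + (C : ℤ_[p]) * x := by
    intro m
    induction m with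
    | zero => intro x; exact ⟨0, 1, one_ne_zero, by simp, by simp⟩
    | succ m ih =>
      intro x
      obtain ⟨A, C, hC0, hCle, hA⟩ := ih (F x)
      obtain ⟨A', B', hB0, hBle, hB⟩ := hstep x
      refine ⟨p * A + C * A', C * B', mul_ne_zero hC0 hB0, ?_, ?_⟩
      · rw [abs_mul, pow_succ]
        exact mul_le_mul hCle hBle (abs_nonneg _)
          (pow_nonneg (by linarith) m)
      · have h0 : (p : ℤ_[p]) ^ (m + 1) * F^[m + 1] x
            = (p : ℤ_[p]) * ((p : ℤ_[p]) ^ m * F^[m] (F x)) := by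
          rw [Function.iterate_succ_apply]; ring
        rw [h0, hA]
        calc (p : ℤ_[p]) * ((A : ℤ_[p]) + (C : ℤ_[p]) * F x)
            = (p : ℤ_[p]) * (A : ℤ_[p]) + (C : ℤ_[p]) * ((p : ℤ_[p]) * F x) := by ring
          _ = _ := by rw [hB]; push_cast; ring
  constructor
  · rintro ⟨k, ℓ, hℓ, hper⟩
    obtain ⟨A, C, hC0, hCle, hA⟩ := claim ℓ (F^[k] n)
    obtain ⟨Ak, Bk, hBk0, _, hAk⟩ := claim k n
    have hiter : F^[k + ℓ] n = F^[ℓ] (F^[k] n) := by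
      rw [add_comm, Function.iterate_add_apply]
    rw [hiter] at hper
    rw [hper] at hA
    have h1 : ((p : ℤ_[p]) ^ ℓ - (C : ℤ_[p])) * F^[k] n = (A : ℤ_[p]) := by
      rw [sub_mul, hA]; ring
    have h3 : ((p : ℤ_[p]) ^ ℓ - (C : ℤ_[p])) * ((p : ℤ_[p]) ^ k * F^[k] n)
        = (p : ℤ_[p]) ^ k * (A : ℤ_[p]) := by rw [← h1]; ring
    rw [hAk] at h3
    have hCd : (p : ℤ) ^ ℓ - C ≠ 0 := by
      have hlt : |C| < (p : ℤ) ^ ℓ := by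
        refine lt_of_le_of_lt hCle ?_
        exact pow_lt_pow_left₀ (by linarith) (by linarith) (by omega)
      have := abs_lt.mp hlt
      intro h; omega
    set d : ℤ := Bk * ((p : ℤ) ^ ℓ - C) with hd
    set e : ℤ := (p : ℤ) ^ k * A - Ak * ((p : ℤ) ^ ℓ - C) with he
    have hd0 : d ≠ 0 := mul_ne_zero hBk0 hCd
    have h2 : ((d : ℤ_[p])) * n = (e : ℤ_[p]) := by
      push_cast [hd, he]
      linear_combination h3
    refine ⟨(e : ℚ) / (d : ℚ), ?_⟩
    have h4 : ((d : ℤ) : ℚ_[p]) * (n : ℚ_[p]) = ((e : ℤ) : ℚ_[p]) := by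
      have := congrArg (fun z : ℤ_[p] => (z : ℚ_[p])) h2
      push_cast at this
      exact_mod_cast this
    have hd' : ((d : ℤ) : ℚ_[p]) ≠ 0 := Int.cast_ne_zero.mpr hd0
    push_cast
    rw [div_eq_iff hd']
    linear_combination -h4
  · rintro ⟨q, hq⟩
    set v : ℤ := (q.den : ℤ) with hv
    have hv1 : 1 ≤ v := by
      have h : 1 ≤ q.den := q.pos
      rw [hv]
      exact_mod_cast h
    have hvZ : ((v : ℤ_[p])) ≠ 0 := Int.cast_ne_zero.mpr (by omega)
    set A : ℤ := ((Finset.univ.sup fun r : Fin p => (a r).natAbs : ℕ) : ℤ) with hAdef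
    have hA0 : 0 ≤ A := Int.natCast_nonneg _
    have hA : ∀ r : Fin p, |a r| ≤ A := by
      intro r
      rw [hAdef, Int.abs_eq_natAbs]
      exact_mod_cast Finset.le_sup (f := fun r : Fin p => (a r).natAbs) (Finset.mem_univ r)
    set M : ℤ := max |q.num| ((A + p) * v) with hM
    have hMv : (A + p) * v ≤ M := le_max_right _ _
    have hM0 : 0 ≤ M := le_trans (abs_nonneg _) (le_max_left _ _)
    have hbase : (v : ℤ_[p]) * n = ((q.num : ℤ) : ℤ_[p]) := by
      have hinj : ((v : ℤ_[p]) * n : ℚ_[p]) = (((q.num : ℤ) : ℤ_[p]) : ℚ_[p]) := by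
        push_cast
        rw [← hq]
        have : (q.den : ℚ) * q = (q.num : ℚ) := by
          rw [mul_comm]
          exact_mod_cast Rat.mul_den_eq_num q
        exact_mod_cast congrArg (fun t : ℚ => (t : ℚ_[p])) this
      exact Subtype.coe_injective hinj
    have hstep2 : ∀ x : ℤ_[p], ∀ u : ℤ, (v : ℤ_[p]) * x = (u : ℤ_[p]) → |u| ≤ M →
        ∃ u' : ℤ, |u'| ≤ M ∧ (v : ℤ_[p]) * F x = (u' : ℤ_[p]) := by
      intro x u hu hule
      obtain ⟨r, hr⟩ := hres x
      obtain ⟨c, hc, heq⟩ := hF x r hr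
      set N : ℤ := a r * v + b r * u - c * v with hN
      have hNeq : (p : ℤ_[p]) * ((v : ℤ_[p]) * F x) = (N : ℤ_[p]) := by
        have h0 : (p : ℤ_[p]) * ((v : ℤ_[p]) * F x)
            = (v : ℤ_[p]) * ((p : ℤ_[p]) * F x) := by ring
        rw [h0, heq, hN]
        push_cast
        linear_combination (b r : ℤ_[p]) * hu
      have hdvd : (p : ℤ) ∣ N := by
        rw [← PadicInt.norm_int_lt_one_iff_dvd, PadicInt.norm_lt_one_iff_dvd]
        exact ⟨_, hNeq.symm⟩
      obtain ⟨u', hu'⟩ := hdvd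
      have hbr : |b r| ≤ (p : ℤ) - 1 := by linarith [(hb r).2]
      have har : |a r| ≤ A := hA r
      have hcb : (c : ℤ) ≤ (p : ℤ) - 1 := by
        have : (c : ℤ) < (p : ℤ) := by exact_mod_cast hc
        omega
      have hc0 : (0 : ℤ) ≤ c := Int.natCast_nonneg _
      have hNle : |N| ≤ A * v + ((p : ℤ) - 1) * M + ((p : ℤ) - 1) * v := by
        have t1 : |N| ≤ |a r * v + b r * u| + |(c : ℤ) * v| := by
          rw [hN]; exact abs_sub _ _
        have t2 : |a r * v + b r * u| ≤ |a r * v| + |b r * u| := abs_add_le _ _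
        have h5 : |a r * v| ≤ A * v := by
          rw [abs_mul, abs_of_nonneg (by omega : (0:ℤ) ≤ v)]
          exact mul_le_mul_of_nonneg_right har (by omega)
        have h6 : |b r * u| ≤ ((p : ℤ) - 1) * M := by
          rw [abs_mul]
          exact mul_le_mul hbr hule (abs_nonneg _) (by linarith)
        have h7 : |(c : ℤ) * v| ≤ ((p : ℤ) - 1) * v := by
          rw [abs_mul, abs_of_nonneg hc0, abs_of_nonneg (by omega : (0:ℤ) ≤ v)]
          exact mul_le_mul_of_nonneg_right hcb (by omega)
        linarith
      refine ⟨u', ?_, ?_⟩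
      · have hNabs : |N| = (p : ℤ) * |u'| := by
          rw [hu', abs_mul, abs_of_nonneg (by linarith : (0:ℤ) ≤ (p:ℤ))]
        have hfin : (p : ℤ) * |u'| ≤ (p : ℤ) * M := by
          rw [← hNabs]
          nlinarith [hMv, hNle]
        exact le_of_mul_le_mul_left hfin (by linarith)
      · have hpne : (p : ℤ_[p]) ≠ 0 := by
          exact_mod_cast (Nat.cast_ne_zero (R := ℤ_[p])).mpr hp.pos.ne'
        apply mul_left_cancel₀ hpne
        rw [hNeq, hu']
        push_cast
        ring
    have hinv : ∀ m : ℕ, ∃ u : ℤ, |u| ≤ M ∧ (v : ℤ_[p]) * F^[m] n = (u : ℤ_[p]) := by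
      intro m
      induction m with
      | zero => exact ⟨q.num, le_max_left _ _, by simpa using hbase⟩
      | succ m ih =>
        obtain ⟨u, hu1, hu2⟩ := ih
        obtain ⟨u', h1, h2⟩ := hstep2 (F^[m] n) u hu2 hu1
        exact ⟨u', h1, by rw [Function.iterate_succ_apply']; exact h2⟩
    set T : Set ℤ_[p] := {x | ∃ u : ℤ, |u| ≤ M ∧ (v : ℤ_[p]) * x = (u : ℤ_[p])} with hT
    have hTfin : T.Finite := by
      have hsub : T ⊆ ⋃ u ∈ Set.Icc (-M) M,
          {x : ℤ_[p] | (v : ℤ_[p]) * x = (u : ℤ_[p])} := by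
        rintro x ⟨u, h1, h2⟩
        exact Set.mem_biUnion (Set.mem_Icc.mpr (abs_le.mp h1)) h2
      refine Set.Finite.subset (Set.Finite.biUnion (Set.finite_Icc _ _) ?_) hsub
      intro u _
      apply Set.Subsingleton.finite
      rintro x hx y hy
      exact mul_left_cancel₀ hvZ (hx.trans hy.symm)
    have : Finite ↥T := hTfin.to_subtype
    obtain ⟨i, j, hij, hfij⟩ := Finite.exists_ne_map_eq_of_infinite
      (fun m : ℕ => (⟨F^[m] n, hinv m⟩ : T))
    have heq : F^[i] n = F^[j] n := congrArg Subtype.val hfij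
    rcases hij.lt_or_gt with h | h
    · refine ⟨i, j - i, by omega, ?_⟩
      have hji : i + (j - i) = j := by omega
      rw [hji]
      exact heq.symm
    · refine ⟨j, i - j, by omega, ?_⟩
      have hji : j + (i - j) = i := by omega
      rw [hji]
      exact heq
end

section
/- Let p be a prime and f a polynomial with coefficients in ℤ_p. Then the following are equivalent: (i) f(n) ≡ n (mod p) for every n ∈ ℤ_p, and the map induced by f on ℤ/p²ℤ is injective (i.e., for all m, n ∈ ℤ_p: f(m) ≡ f(n) (mod p²) implies m ≡ n (mod p²)); (ii) the evaluation map n ↦ f(n) is a bijection of ℤ_p, f(n) ≡ n (mod p) for every n ∈ ℤ_p, and for every k ∈ ℕ and all m, n ∈ ℤ_p: m ≡ n (mod p^k) if and only if f(m) ≡ f(n) (mod p^k). In other words, f is a p-permutation polynomial if and only if its evaluation defines a p-adic permutation, and this can be tested on the two levels ℤ/pℤ and ℤ/p²ℤ alone. -/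
/-! The Taylor expansion `f (n + y) ≡ f n + f' n * y (mod y²)` drives the argument. Injectivity
modulo `p²` forces `p ∤ f' n`, since otherwise `f (n + p) ≡ f n (mod p²)`. Given that, a congruence
`f m ≡ f n (mod p^(k+1))` with `m ≡ n (mod p^k)`, `k ≥ 1`, lifts to `m ≡ n (mod p^(k+1))`, so by
induction from the level `p` the map `f` reflects every congruence. Injectivity on `ℤ_p` then
follows from Krull's intersection theorem, and surjectivity from Hensel's lemma. -/

open Polynomial

theorem eq_zero_of_forall_pow_dvd_s19 {R : Type*} [CommRing R] [IsDomain R] [IsNoetherianRing R]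
    {π : R} (hπ : ¬IsUnit π) {x : R} (h : ∀ k, π ^ k ∣ x) : x = 0 := by
  have hbot := Ideal.iInf_pow_eq_bot_of_isDomain (Ideal.span {π})
    (by rwa [Ne, Ideal.span_singleton_eq_top])
  rw [← Ideal.mem_bot, ← hbot, Ideal.mem_iInf]
  intro k
  rw [Ideal.span_singleton_pow, Ideal.mem_span_singleton]
  exact h k

namespace Polynomial

variable {R : Type*} [CommRing R]

theorem sq_dvd_eval_add_sub_eval_sub_derivative_mul (f : R[X]) (x y : R) :
    y ^ 2 ∣ f.eval (x + y) - f.eval x - f.derivative.eval x * y := by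
  obtain ⟨c, hc⟩ := f.binomExpansion x y
  exact ⟨c, by rw [hc]; ring⟩

theorem dvd_sub_iff_dvd_eval_sub_of_forall_dvd_eval_sub {π : R} {f : R[X]}
    (hf : ∀ n, π ∣ f.eval n - n) (m n : R) : π ∣ m - n ↔ π ∣ f.eval m - f.eval n := by
  have h : f.eval m - f.eval n = (f.eval m - m) - (f.eval n - n) + (m - n) := by ring
  rw [h, dvd_add_right ((hf m).sub (hf n))]

variable [IsDomain R] {π : R}

theorem not_dvd_derivative_eval_of_sq_dvd_eval_sub_imp (hπ : Prime π) {f : R[X]}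
    (hf : ∀ m n, π ^ 2 ∣ f.eval m - f.eval n → π ^ 2 ∣ m - n) (n : R) :
    ¬π ∣ f.derivative.eval n := by
  rintro ⟨d, hd⟩
  have h : π ^ 2 ∣ f.eval (n + π) - f.eval n := by
    have hlin : π ^ 2 ∣ f.derivative.eval n * π := ⟨d, by rw [hd]; ring⟩
    simpa using (sq_dvd_eval_add_sub_eval_sub_derivative_mul f n π).add hlin
  have : π ^ 2 ∣ π ^ 1 := by simpa using hf _ _ h
  exact absurd ((pow_dvd_pow_iff hπ.ne_zero hπ.not_isUnit).1 this) (by norm_num)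

theorem pow_succ_dvd_sub_of_pow_succ_dvd_eval_sub (hπ : Prime π) {f : R[X]} {k : ℕ} (hk : k ≠ 0)
    {m n : R} (hd : ¬π ∣ f.derivative.eval n) (hmn : π ^ k ∣ m - n)
    (hf : π ^ (k + 1) ∣ f.eval m - f.eval n) : π ^ (k + 1) ∣ m - n := by
  obtain ⟨t, ht⟩ := hmn
  obtain rfl : m = n + π ^ k * t := by rw [← ht]; ring
  have hsq : π ^ (k + 1) ∣ (π ^ k * t) ^ 2 :=
    (pow_dvd_pow π (show k + 1 ≤ 2 * k by omega)).trans ⟨t ^ 2, by ring⟩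
  have hlin : π ^ k * π ∣ π ^ k * (f.derivative.eval n * t) := by
    rw [← pow_succ]
    convert (dvd_sub hf (hsq.trans (sq_dvd_eval_add_sub_eval_sub_derivative_mul f n _))) using 1
    ring
  have hπt : π ∣ t :=
    (hπ.dvd_or_dvd ((mul_dvd_mul_iff_left (pow_ne_zero k hπ.ne_zero)).1 hlin)).resolve_left hd
  rw [add_sub_cancel_left, pow_succ]
  exact mul_dvd_mul_left _ hπt

theorem pow_dvd_sub_iff_pow_dvd_eval_sub (hπ : Prime π) {f : R[X]}
    (hf : ∀ n, π ∣ f.eval n - n) (hd : ∀ n, ¬π ∣ f.derivative.eval n) (k : ℕ) (m n : R) :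
    π ^ k ∣ m - n ↔ π ^ k ∣ f.eval m - f.eval n := by
  refine ⟨fun h => h.trans (sub_dvd_eval_sub m n f), fun h => ?_⟩
  induction k with
  | zero => simp
  | succ k ih =>
    rcases Nat.eq_zero_or_pos k with rfl | hk
    · simpa using (dvd_sub_iff_dvd_eval_sub_of_forall_dvd_eval_sub hf m n).2 (by simpa using h)
    · exact pow_succ_dvd_sub_of_pow_succ_dvd_eval_sub hπ hk.ne' (hd n)
        (ih ((pow_dvd_pow π k.le_succ).trans h)) h

theorem injective_eval_of_forall_pow_dvd_eval_sub_imp [IsNoetherianRing R] (hπ : ¬IsUnit π)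
    {f : R[X]} (hf : ∀ k m n, π ^ k ∣ f.eval m - f.eval n → π ^ k ∣ m - n) :
    Function.Injective fun n => f.eval n := fun m n hmn =>
  sub_eq_zero.1 <| eq_zero_of_forall_pow_dvd_s19 hπ fun k => hf k m n (by simp [hmn])

end Polynomial

namespace PadicInt

variable {p : ℕ} [Fact p.Prime]

theorem norm_eq_one_iff_not_dvd (x : ℤ_[p]) : ‖x‖ = 1 ↔ ¬(p : ℤ_[p]) ∣ x := by
  rw [← norm_lt_one_iff_dvd, not_lt]
  exact ⟨ge_of_eq, (norm_le_one x).antisymm⟩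

theorem surjective_eval_of_forall_dvd_eval_sub {f : ℤ_[p][X]}
    (hf : ∀ n, (p : ℤ_[p]) ∣ f.eval n - n)
    (hd : ∀ n, ¬(p : ℤ_[p]) ∣ f.derivative.eval n) : Function.Surjective fun n => f.eval n := by
  intro y
  have hF : ‖aeval y (f - C y)‖ < ‖aeval y (derivative (f - C y))‖ ^ 2 := by
    simpa [(norm_eq_one_iff_not_dvd _).2 (hd y), norm_lt_one_iff_dvd] using hf y
  obtain ⟨z, hz, -⟩ := hensels_lemma hF
  exact ⟨z, by simpa [sub_eq_zero] using hz⟩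

end PadicInt

/-- **Characterization of `p`-permutation polynomials** (`LCharacPermPoly` +
`TCharacPermPoly`). For a polynomial `f ∈ ℤ_p[x]` the following are equivalent:
(i) `f(n) ≡ n (mod p)` for all `n`, and the map induced by `f` on `ℤ/p²ℤ` is
injective (`f(m) ≡ f(n) (mod p²) → m ≡ n (mod p²)`);
(ii) evaluation of `f` is a bijection of `ℤ_p`, `f(n) ≡ n (mod p)` for all `n`, and
for every `k` and all `m, n`: `m ≡ n (mod p^k) ↔ f(m) ≡ f(n) (mod p^k)`.
That is, `f` is a `p`-permutation polynomial iff its evaluation is a `p`-adic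
permutation, and this can be tested on `ℤ/pℤ` and `ℤ/p²ℤ` alone. -/
theorem stmt19 (p : ℕ) [Fact p.Prime] (f : Polynomial ℤ_[p]) :
    ((∀ n : ℤ_[p], (p : ℤ_[p]) ∣ f.eval n - n) ∧
      (∀ m n : ℤ_[p],
        (p : ℤ_[p]) ^ 2 ∣ f.eval m - f.eval n → (p : ℤ_[p]) ^ 2 ∣ m - n)) ↔
    (Function.Bijective (fun n : ℤ_[p] => f.eval n) ∧
      (∀ n : ℤ_[p], (p : ℤ_[p]) ∣ f.eval n - n) ∧
      (∀ k : ℕ, ∀ m n : ℤ_[p],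
        (p : ℤ_[p]) ^ k ∣ m - n ↔ (p : ℤ_[p]) ^ k ∣ f.eval m - f.eval n)) := by
  constructor
  · rintro ⟨hmod, hsq⟩
    have hd := not_dvd_derivative_eval_of_sq_dvd_eval_sub_imp PadicInt.prime_p hsq
    have hpow := pow_dvd_sub_iff_pow_dvd_eval_sub PadicInt.prime_p hmod hd
    refine ⟨⟨?_, PadicInt.surjective_eval_of_forall_dvd_eval_sub hmod hd⟩, hmod, hpow⟩
    exact injective_eval_of_forall_pow_dvd_eval_sub_imp PadicInt.prime_p.not_isUnit
      fun k m n => (hpow k m n).2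
  · rintro ⟨-, hmod, hpow⟩
    exact ⟨hmod, fun m n => (hpow 2 m n).2⟩
end
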